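/- arXiv:1808.08118 — 5 statements merged into one kernel-verified Lean document; each statement's English description precedes it below -/
import Mathlib

section
/- For every natural number m, m! = ∑_{μ ⊢ m} (f^μ)^2, where the sum is over all integer partitions μ of m and f^μ denotes the number of standard Young tableaux of shape μ. -/
open YoungDiagram Finset


/-- The Young diagram of an integer partition. -/
def shapeOf {m : ℕ} (μ : Nat.Partition m) : YoungDiagram :=
  YoungDiagram.ofRowLens (μ.parts.sort (· ≥ ·)) (List.Pairwise.sortedGE (Multiset.pairwise_sort ..))

lemma cellsOfRowLens_card (w : List ℕ) : (YoungDiagram.cellsOfRowLens w).card = w.sum := by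
  induction w with
  | nil => simp [YoungDiagram.cellsOfRowLens]
  | cons a l ih =>
    rw [YoungDiagram.cellsOfRowLens, Finset.card_union_of_disjoint, Finset.card_map, ih]
    · simp [List.sum_cons]
    · rw [Finset.disjoint_left]
      rintro ⟨i, j⟩ hm hm'
      simp only [Finset.mem_product, Finset.mem_singleton] at hm
      simp only [Finset.mem_map] at hm'
      obtain ⟨⟨x, y⟩, _, h⟩ := hm'
      rw [Prod.ext_iff] at h
      obtain ⟨h1, -⟩ := h
      simp [Function.Embedding.prodMap, Function.Embedding.coeFn_mk] at h1
      omega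

lemma card_ofRowLens (w : List ℕ) (hw : w.SortedGE) :
    (YoungDiagram.ofRowLens w hw).card = w.sum := cellsOfRowLens_card w

lemma card_shapeOf {m : ℕ} (μ : Nat.Partition m) : (shapeOf μ).card = m := by
  rw [shapeOf, card_ofRowLens]
  rw [← Multiset.sum_coe, Multiset.sort_eq, μ.parts_sum]

lemma card_sum_rowLens (Y : YoungDiagram) : Y.card = Y.rowLens.sum := by
  conv_lhs => rw [← ofRowLens_to_rowLens_eq_self (μ := Y)]
  exact card_ofRowLens _ _

lemma shapeOf_injective {m : ℕ} : Function.Injective (shapeOf (m := m)) := by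
  intro μ ν h
  have h1 : ∀ ξ : Nat.Partition m, (shapeOf ξ).rowLens = ξ.parts.sort (· ≥ ·) := by
    intro ξ
    exact rowLens_ofRowLens_eq_self (fun x hx => ξ.parts_pos (Multiset.mem_sort _ |>.1 hx))
  have := (h1 μ).symm.trans ((congrArg YoungDiagram.rowLens h).trans (h1 ν))
  ext : 1
  have := congrArg (fun l : List ℕ => (l : Multiset ℕ)) this
  simpa [Multiset.sort_eq] using this

lemma shapeOf_surj {m : ℕ} (Y : YoungDiagram) (h : Y.card = m) : ∃ μ : Nat.Partition m, shapeOf μ = Y := by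
  refine ⟨⟨↑Y.rowLens, fun {i} hi => Y.pos_of_mem_rowLens i (by exact_mod_cast hi), ?_⟩, ?_⟩
  · rw [Multiset.sum_coe, ← card_sum_rowLens, h]
  · have hs : Multiset.sort (↑Y.rowLens : Multiset ℕ) (· ≥ ·) = Y.rowLens := by
      apply List.Perm.eq_of_sortedGE (List.Pairwise.sortedGE (Multiset.pairwise_sort ..))
        (Y.rowLens_sorted) (Multiset.coe_eq_coe.mp (by rw [Multiset.sort_eq]))
    rw [shapeOf]
    convert ofRowLens_to_rowLens_eq_self (μ := Y) using 2


section P2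
/-- cover relation on Young diagrams -/
def cov (Z Y : YoungDiagram) : Prop := Z ≤ Y ∧ Y.card = Z.card + 1

lemma card_le_of_le {Z Y : YoungDiagram} (h : Z ≤ Y) : Z.card ≤ Y.card :=
  Finset.card_le_card (YoungDiagram.cells_subset_iff.mpr h)

lemma yd_eq_of_le_card {Z Y : YoungDiagram} (h : Z ≤ Y) (hc : Y.card ≤ Z.card) : Z = Y := by
  have := Finset.eq_of_subset_of_card_le (YoungDiagram.cells_subset_iff.mpr h) hc
  apply SetLike.ext
  intro c
  rw [← YoungDiagram.mem_cells, ← YoungDiagram.mem_cells, this]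

lemma rowLen_eq {Y : YoungDiagram} {i j : ℕ} (h : ∀ y, (i, y) ∈ Y ↔ y < j) : Y.rowLen i = j := by
  rcases Nat.lt_trichotomy (Y.rowLen i) j with hlt | he | hgt
  · have := (h (Y.rowLen i)).mpr hlt
    rw [YoungDiagram.mem_iff_lt_rowLen] at this; omega
  · exact he
  · have := (h j).mp (YoungDiagram.mem_iff_lt_rowLen.mpr hgt); omega

lemma rowLen_pos_lt_colLen {Y : YoungDiagram} {i : ℕ} (h : 0 < Y.rowLen i) :
    i < Y.colLen 0 := by
  rw [← YoungDiagram.mem_iff_lt_colLen]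
  rw [← YoungDiagram.mem_iff_lt_rowLen] at h
  exact h

/-- removable rows -/
def Rems (Y : YoungDiagram) : Finset ℕ :=
  (Finset.range (Y.colLen 0)).filter fun i => Y.rowLen (i + 1) < Y.rowLen i

/-- addable rows -/
def Adds (Y : YoungDiagram) : Finset ℕ :=
  (Finset.range (Y.colLen 0 + 1)).filter fun i => i = 0 ∨ Y.rowLen i < Y.rowLen (i - 1)

lemma mem_Rems {Y : YoungDiagram} {i : ℕ} : i ∈ Rems Y ↔ Y.rowLen (i + 1) < Y.rowLen i := by
  constructor
  · intro h; exact (Finset.mem_filter.mp h).2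
  · intro h
    exact Finset.mem_filter.mpr ⟨Finset.mem_range.mpr (rowLen_pos_lt_colLen (by omega)), h⟩

lemma mem_Adds {Y : YoungDiagram} {i : ℕ} :
    i ∈ Adds Y ↔ (i = 0 ∨ Y.rowLen i < Y.rowLen (i - 1)) := by
  constructor
  · intro h; exact (Finset.mem_filter.mp h).2
  · intro h
    refine Finset.mem_filter.mpr ⟨Finset.mem_range.mpr ?_, h⟩
    rcases h with rfl | h
    · omega
    · have : i - 1 < Y.colLen 0 := rowLen_pos_lt_colLen (by omega)
      omega

lemma zero_mem_Adds (Y : YoungDiagram) : 0 ∈ Adds Y := mem_Adds.mpr (Or.inl rfl)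

/-- the rightmost cell of row `i` -/
def corner (Y : YoungDiagram) (i : ℕ) : ℕ × ℕ := (i, Y.rowLen i - 1)

lemma insert_isLowerSet {Y : YoungDiagram} {i : ℕ}
    (h : i = 0 ∨ Y.rowLen i < Y.rowLen (i - 1)) :
    IsLowerSet (↑(insert (i, Y.rowLen i) Y.cells) : Set (ℕ × ℕ)) := by
  rintro ⟨x, y⟩ ⟨a, b⟩ ⟨(ha : a ≤ x), (hb : b ≤ y)⟩ hm
  simp only [Finset.coe_insert, Set.mem_insert_iff, Finset.mem_coe,
    YoungDiagram.mem_cells] at hm ⊢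
  rcases hm with hm | hm
  · have hx : x = i := congrArg Prod.fst hm
    have hy : y = Y.rowLen i := congrArg Prod.snd hm
    subst hx
    rcases Nat.lt_or_ge b (Y.rowLen x) with hby | hby
    · exact Or.inr (Y.up_left_mem ha (le_refl b) (YoungDiagram.mem_iff_lt_rowLen.mpr hby))
    · have hbe : b = Y.rowLen x := by omega
      rcases Nat.eq_or_lt_of_le ha with rfl | halt
      · exact Or.inl (by rw [hbe])
      · rcases h with rfl | hlt
        · omega
        · have h2 : Y.rowLen (x - 1) ≤ Y.rowLen a := Y.rowLen_anti a (x - 1) (by omega)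
          right
          rw [YoungDiagram.mem_iff_lt_rowLen]
          omega
  · exact Or.inr (Y.up_left_mem ha hb hm)

lemma erase_isLowerSet {Y : YoungDiagram} {i : ℕ}
    (h : Y.rowLen (i + 1) < Y.rowLen i) :
    IsLowerSet (↑(Y.cells.erase (i, Y.rowLen i - 1)) : Set (ℕ × ℕ)) := by
  rintro ⟨x, y⟩ ⟨a, b⟩ ⟨(ha : a ≤ x), (hb : b ≤ y)⟩ hm
  simp only [Finset.coe_erase, Set.mem_diff, Finset.mem_coe, Set.mem_singleton_iff,
    YoungDiagram.mem_cells] at hm ⊢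
  obtain ⟨hmY, hne⟩ := hm
  refine ⟨Y.up_left_mem ha hb hmY, ?_⟩
  intro heq
  have hai : a = i := congrArg Prod.fst heq
  have hbi : b = Y.rowLen i - 1 := congrArg Prod.snd heq
  have hyx : y < Y.rowLen x := YoungDiagram.mem_iff_lt_rowLen.mp hmY
  apply hne
  rcases Nat.eq_or_lt_of_le ha with heq | hlt
  · have hxi : x = i := by omega
    subst hxi
    rw [Prod.ext_iff]
    exact ⟨rfl, by omega⟩
  · exfalso
    have h1 : Y.rowLen x ≤ Y.rowLen (i + 1) := Y.rowLen_anti _ _ (by omega)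
    omega

/-- Adding a cell at the end of row `i` (junk value `Y` if not addable). -/
def addCell (Y : YoungDiagram) (i : ℕ) : YoungDiagram :=
  if h : i ∈ Adds Y then
    { cells := insert (i, Y.rowLen i) Y.cells
      isLowerSet := insert_isLowerSet (mem_Adds.mp h) }
  else Y

/-- Removing the last cell of row `i` (junk value `Y` if not removable). -/
def eraseCell (Y : YoungDiagram) (i : ℕ) : YoungDiagram :=
  if h : i ∈ Rems Y then
    { cells := Y.cells.erase (corner Y i)
      isLowerSet := erase_isLowerSet (mem_Rems.mp h) }
  else Y

lemma self_notMem {Y : YoungDiagram} (i : ℕ) : (i, Y.rowLen i) ∉ Y := by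
  rw [YoungDiagram.mem_iff_lt_rowLen]; omega

lemma mem_addCell {Y : YoungDiagram} {i : ℕ} (h : i ∈ Adds Y) (c : ℕ × ℕ) :
    c ∈ addCell Y i ↔ c = (i, Y.rowLen i) ∨ c ∈ Y := by
  rw [addCell, dif_pos h, ← YoungDiagram.mem_cells, YoungDiagram.mem_mk, Finset.mem_insert,
    YoungDiagram.mem_cells]

lemma card_addCell {Y : YoungDiagram} {i : ℕ} (h : i ∈ Adds Y) :
    (addCell Y i).card = Y.card + 1 := by
  rw [addCell, dif_pos h]
  exact Finset.card_insert_of_notMem (by rw [YoungDiagram.mem_cells]; exact self_notMem i)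

lemma cov_addCell {Y : YoungDiagram} {i : ℕ} (h : i ∈ Adds Y) : cov Y (addCell Y i) :=
  ⟨fun c hc => (mem_addCell h c).mpr (Or.inr hc), card_addCell h⟩

lemma rowLen_addCell_self {Y : YoungDiagram} {i : ℕ} (h : i ∈ Adds Y) :
    (addCell Y i).rowLen i = Y.rowLen i + 1 := by
  apply rowLen_eq
  intro y
  rw [mem_addCell h, YoungDiagram.mem_iff_lt_rowLen, Prod.ext_iff]
  constructor
  · rintro (⟨-, h2⟩ | hy) <;> omega
  · intro hy
    rcases Nat.lt_or_ge y (Y.rowLen i) with h1 | h1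
    · exact Or.inr h1
    · exact Or.inl ⟨rfl, by omega⟩

lemma rowLen_addCell_ne {Y : YoungDiagram} {i k : ℕ} (h : i ∈ Adds Y) (hk : k ≠ i) :
    (addCell Y i).rowLen k = Y.rowLen k := by
  apply rowLen_eq
  intro y
  rw [mem_addCell h, YoungDiagram.mem_iff_lt_rowLen, Prod.ext_iff]
  constructor
  · rintro (⟨h1, -⟩ | hy)
    · exact absurd h1 hk
    · exact hy
  · exact fun hy => Or.inr hy

lemma cover_exists {Z Y : YoungDiagram} (h : cov Z Y) : ∃ i ∈ Adds Z, Y = addCell Z i := by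
  obtain ⟨hle, hcard⟩ := h
  have hsub : Z.cells ⊆ Y.cells := YoungDiagram.cells_subset_iff.mpr hle
  have hs : (Y.cells \ Z.cells).card = 1 := by
    rw [Finset.card_sdiff_of_subset hsub]
    have h1 : Y.cells.card = Y.card := rfl
    have h2 : Z.cells.card = Z.card := rfl
    omega
  obtain ⟨c, hc⟩ := Finset.card_eq_one.mp hs
  have hcellseq : Y.cells = insert c Z.cells := by
    have h1 : Y.cells = Z.cells ∪ (Y.cells \ Z.cells) := by
      rw [Finset.union_sdiff_of_subset hsub]
    rw [h1, hc, Finset.union_comm]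
    simp
  have hcY : c ∈ Y := by
    rw [← YoungDiagram.mem_cells, hcellseq]; exact Finset.mem_insert_self c _
  have hcZ : c ∉ Z := by
    intro hmem
    have : c ∈ Y.cells \ Z.cells := hc ▸ Finset.mem_singleton_self c
    exact (Finset.mem_sdiff.mp this).2 ((YoungDiagram.mem_cells _).mpr hmem)
  obtain ⟨i, j⟩ := c
  have hmemY : ∀ d : ℕ × ℕ, d ∈ Y ↔ d = (i, j) ∨ d ∈ Z := by
    intro d
    rw [← YoungDiagram.mem_cells, hcellseq, Finset.mem_insert, YoungDiagram.mem_cells]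
  have hj1 : Z.rowLen i ≤ j := by
    by_contra hlt
    exact hcZ (YoungDiagram.mem_iff_lt_rowLen.mpr (by omega))
  have hj2 : ∀ j' < j, j' < Z.rowLen i := by
    intro j' hj'
    have hYm : (i, j') ∈ Y := Y.up_left_mem (le_refl i) (le_of_lt hj') hcY
    rcases (hmemY (i, j')).mp hYm with he | hz
    · rw [Prod.ext_iff] at he
      obtain ⟨-, h2⟩ := he
      omega
    · exact YoungDiagram.mem_iff_lt_rowLen.mp hz
  have hjeq : j = Z.rowLen i := by
    rcases Nat.lt_or_ge (Z.rowLen i) j with hlt | hge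
    · have := hj2 _ hlt; omega
    · omega
  have haddable : i ∈ Adds Z := by
    rw [mem_Adds]
    rcases Nat.eq_zero_or_pos i with rfl | hi
    · exact Or.inl rfl
    · right
      have hYm : (i - 1, j) ∈ Y := Y.up_left_mem (by omega) (le_refl j) hcY
      rcases (hmemY (i - 1, j)).mp hYm with he | hz
      · rw [Prod.ext_iff] at he
        obtain ⟨h1, -⟩ := he
        omega
      · have := YoungDiagram.mem_iff_lt_rowLen.mp hz; omega
  refine ⟨i, haddable, ?_⟩
  apply SetLike.ext
  intro d
  rw [hmemY d, mem_addCell haddable, hjeq]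

lemma addCell_inj {Y : YoungDiagram} {i₁ i₂ : ℕ} (h₁ : i₁ ∈ Adds Y) (h₂ : i₂ ∈ Adds Y)
    (he : addCell Y i₁ = addCell Y i₂) : i₁ = i₂ := by
  have : (i₁, Y.rowLen i₁) ∈ addCell Y i₂ := by
    rw [← he, mem_addCell h₁]; exact Or.inl rfl
  rcases (mem_addCell h₂ _).mp this with hc | hc
  · exact congrArg Prod.fst hc
  · exact absurd hc (self_notMem i₁)

lemma rowLen_pos_of_Rems {Y : YoungDiagram} {i : ℕ} (h : i ∈ Rems Y) : 0 < Y.rowLen i := by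
  have := mem_Rems.mp h; omega

lemma corner_mem {Y : YoungDiagram} {i : ℕ} (h : i ∈ Rems Y) : corner Y i ∈ Y := by
  rw [corner, YoungDiagram.mem_iff_lt_rowLen]
  have := rowLen_pos_of_Rems h
  omega

lemma mem_eraseCell {Y : YoungDiagram} {i : ℕ} (h : i ∈ Rems Y) (c : ℕ × ℕ) :
    c ∈ eraseCell Y i ↔ c ≠ corner Y i ∧ c ∈ Y := by
  rw [eraseCell, dif_pos h, ← YoungDiagram.mem_cells, YoungDiagram.mem_mk, Finset.mem_erase,
    YoungDiagram.mem_cells]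

lemma card_eraseCell {Y : YoungDiagram} {i : ℕ} (h : i ∈ Rems Y) :
    (eraseCell Y i).card + 1 = Y.card := by
  rw [eraseCell, dif_pos h]
  have : (Y.cells.erase (corner Y i)).card = Y.cells.card - 1 :=
    Finset.card_erase_of_mem ((YoungDiagram.mem_cells _).mpr (corner_mem h))
  have h2 : 0 < Y.cells.card := Finset.card_pos.mpr ⟨_, (YoungDiagram.mem_cells _).mpr (corner_mem h)⟩
  show (Y.cells.erase (corner Y i)).card + 1 = Y.cells.card
  omega

lemma cov_eraseCell {Y : YoungDiagram} {i : ℕ} (h : i ∈ Rems Y) : cov (eraseCell Y i) Y :=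
  ⟨fun c hc => ((mem_eraseCell h c).mp hc).2, (card_eraseCell h).symm⟩

lemma eraseCell_inj {Y : YoungDiagram} {i₁ i₂ : ℕ} (h₁ : i₁ ∈ Rems Y) (h₂ : i₂ ∈ Rems Y)
    (he : eraseCell Y i₁ = eraseCell Y i₂) : i₁ = i₂ := by
  by_contra hne
  have hc1 : corner Y i₁ ∈ eraseCell Y i₂ := by
    rw [mem_eraseCell h₂]
    refine ⟨?_, corner_mem h₁⟩
    intro habs
    exact hne (congrArg Prod.fst habs)
  rw [← he, mem_eraseCell h₁] at hc1
  exact hc1.1 rfl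

lemma cocover_exists {Z Y : YoungDiagram} (h : cov Z Y) : ∃ i ∈ Rems Y, Z = eraseCell Y i := by
  obtain ⟨i, hi, rfl⟩ := cover_exists h
  have hrY : (addCell Z i).rowLen i = Z.rowLen i + 1 := rowLen_addCell_self hi
  have hrY1 : (addCell Z i).rowLen (i + 1) = Z.rowLen (i + 1) := rowLen_addCell_ne hi (by omega)
  have hZle : Z.rowLen (i + 1) ≤ Z.rowLen i := Z.rowLen_anti _ _ (by omega)
  have hrem : i ∈ Rems (addCell Z i) := by
    rw [mem_Rems, hrY, hrY1]; omega
  refine ⟨i, hrem, ?_⟩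
  apply SetLike.ext
  intro d
  rw [mem_eraseCell hrem, mem_addCell hi]
  have hcorner : corner (addCell Z i) i = (i, Z.rowLen i) := by
    rw [corner, hrY]
    simp
  rw [hcorner]
  constructor
  · intro hd
    refine ⟨?_, Or.inr hd⟩
    rintro rfl
    exact self_notMem i hd
  · rintro ⟨hne, (hd | hd)⟩
    · exact absurd hd hne
    · exact hd

lemma card_Adds (Y : YoungDiagram) : (Adds Y).card = (Rems Y).card + 1 := by
  have hins : Adds Y = insert 0 ((Rems Y).image (· + 1)) := by
    ext i
    rw [mem_Adds, Finset.mem_insert, Finset.mem_image]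
    constructor
    · rintro (rfl | h)
      · exact Or.inl rfl
      · rcases Nat.eq_zero_or_pos i with rfl | hi
        · exact Or.inl rfl
        · right
          exact ⟨i - 1, mem_Rems.mpr (by
            have : i - 1 + 1 = i := by omega
            rw [this]; exact h), by omega⟩
    · rintro (rfl | ⟨j, hj, rfl⟩)
      · exact Or.inl rfl
      · right
        have := mem_Rems.mp hj
        have h1 : j + 1 - 1 = j := by omega
        rw [h1]
        exact this
  rw [hins, Finset.card_insert_of_notMem (by
    simp only [Finset.mem_image]
    rintro ⟨j, -, habs⟩
    omega), Finset.card_image_of_injective _ (fun a b hab => by omega), add_comm]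
end P2
section SYTdef

/-- `f^μ`: the number of standard Young tableaux of shape `μ`, i.e. bijective fillings
of the cells of `μ` with `0,…,m-1` that strictly increase along rows and columns. -/
noncomputable def fSYT (m : ℕ) (μ : Nat.Partition m) : ℕ :=
  Nat.card {T : {c : ℕ × ℕ // c ∈ shapeOf μ} ≃ Fin m //
    ∀ c d : {c : ℕ × ℕ // c ∈ shapeOf μ},
      (c.1.1 = d.1.1 → c.1.2 < d.1.2 → T c < T d) ∧
      (c.1.2 = d.1.2 → c.1.1 < d.1.1 → T c < T d)}

/-- standard Young tableaux of a diagram -/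
def SYT (Z : YoungDiagram) :=
  {T : {c : ℕ × ℕ // c ∈ Z} ≃ Fin Z.card //
    ∀ c d : {c : ℕ × ℕ // c ∈ Z},
      (c.1.1 = d.1.1 → c.1.2 < d.1.2 → T c < T d) ∧
      (c.1.2 = d.1.2 → c.1.1 < d.1.1 → T c < T d)}

noncomputable def g (Z : YoungDiagram) : ℕ := Nat.card (SYT Z)

lemma g_eq_aux (Z : YoungDiagram) (m : ℕ) (h : Z.card = m) :
    Nat.card {T : {c : ℕ × ℕ // c ∈ Z} ≃ Fin m //
      ∀ c d : {c : ℕ × ℕ // c ∈ Z},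
        (c.1.1 = d.1.1 → c.1.2 < d.1.2 → T c < T d) ∧
        (c.1.2 = d.1.2 → c.1.1 < d.1.1 → T c < T d)} = g Z := by
  subst h; rfl

lemma fSYT_eq_g {m : ℕ} (μ : Nat.Partition m) : fSYT m μ = g (shapeOf μ) :=
  g_eq_aux _ m (card_shapeOf μ)

instance cellFintype (Z : YoungDiagram) : Fintype {c : ℕ × ℕ // c ∈ Z} :=
  Fintype.ofEquiv {c : ℕ × ℕ // c ∈ Z.cells}
    (Equiv.subtypeEquivRight (fun c => YoungDiagram.mem_cells c))

instance (Z : YoungDiagram) : Finite (SYT Z) := by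
  unfold SYT
  infer_instance

lemma mem_iff' {Y : YoungDiagram} {c : ℕ × ℕ} : c ∈ Y ↔ c.2 < Y.rowLen c.1 := by
  obtain ⟨a, b⟩ := c
  exact YoungDiagram.mem_iff_lt_rowLen

lemma symm_mk {α : Type*} {n : ℕ} (e : α ≃ Fin n) (x : α) (pf : (e x).1 < n) :
    e.symm ⟨(e x).1, pf⟩ = x := by
  have : (⟨(e x).1, pf⟩ : Fin n) = e x := Fin.ext rfl
  rw [this, Equiv.symm_apply_apply]

lemma app_mk {p : ℕ × ℕ → Prop} {β : Type*} (e : {c // p c} ≃ β) (x : {c // p c})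
    (pf : p x.1) : e ⟨x.1, pf⟩ = e x := by
  congr 1

end SYTdef

section Branch

variable {Y : YoungDiagram}

/-- Extension of an SYT of `eraseCell Y i` to one of `Y`, putting the max entry
in the removed corner. -/
def extEquiv (i : ℕ) (hi : i ∈ Rems Y) (S : SYT (eraseCell Y i)) :
    {c : ℕ × ℕ // c ∈ Y} ≃ Fin Y.card where
  toFun c :=
    if h : c.1 = corner Y i then ⟨Y.card - 1, by have := card_eraseCell hi; omega⟩
    else ⟨(S.1 ⟨c.1, (mem_eraseCell hi c.1).mpr ⟨h, c.2⟩⟩).1,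
      by
        have h1 := card_eraseCell hi
        have h2 := (S.1 ⟨c.1, (mem_eraseCell hi c.1).mpr ⟨h, c.2⟩⟩).2
        omega⟩
  invFun k :=
    if h : k.1 = Y.card - 1 then ⟨corner Y i, corner_mem hi⟩
    else ⟨(S.1.symm ⟨k.1, by have h1 := card_eraseCell hi; have h2 := k.2; omega⟩).1,
      ((mem_eraseCell hi _).mp
        (S.1.symm ⟨k.1, by have h1 := card_eraseCell hi; have h2 := k.2; omega⟩).2).2⟩
  left_inv c := by
    by_cases h : c.1 = corner Y i
    · dsimp only
      rw [dif_pos h]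
      dsimp only
      rw [dif_pos (show Y.card - 1 = Y.card - 1 from rfl)]
      exact Subtype.ext h.symm
    · have hce := card_eraseCell hi
      have hne : ((S.1 ⟨c.1, (mem_eraseCell hi c.1).mpr ⟨h, c.2⟩⟩ : Fin _)).1 ≠ Y.card - 1 := by
        have hlt := (S.1 ⟨c.1, (mem_eraseCell hi c.1).mpr ⟨h, c.2⟩⟩).2
        omega
      dsimp only
      rw [dif_neg h]
      dsimp only
      rw [dif_neg hne]
      apply Subtype.ext
      dsimp only
      rw [symm_mk]
  right_inv k := by
    by_cases h : k.1 = Y.card - 1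
    · dsimp only
      rw [dif_pos h]
      dsimp only
      rw [dif_pos (show corner Y i = corner Y i from rfl)]
      exact Fin.ext h.symm
    · have hne : (S.1.symm ⟨k.1, by have h1 := card_eraseCell hi; have h2 := k.2; omega⟩).1
          ≠ corner Y i :=
        ((mem_eraseCell hi _).mp
          (S.1.symm ⟨k.1, by have h1 := card_eraseCell hi; have h2 := k.2; omega⟩).2).1
      dsimp only
      rw [dif_neg h]
      dsimp only
      rw [dif_neg hne]
      apply Fin.ext
      dsimp only
      rw [app_mk, Equiv.apply_symm_apply]

end Branch
section Branch2

variable {Y : YoungDiagram}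

lemma extEquiv_apply_corner {i : ℕ} (hi : i ∈ Rems Y) (S : SYT (eraseCell Y i))
    (c : {c : ℕ × ℕ // c ∈ Y}) (h : c.1 = corner Y i) :
    ((extEquiv i hi S) c : ℕ) = Y.card - 1 := by
  show ((extEquiv i hi S).toFun c : ℕ) = _
  rw [extEquiv]
  dsimp only
  rw [dif_pos h]

lemma extEquiv_apply_ne {i : ℕ} (hi : i ∈ Rems Y) (S : SYT (eraseCell Y i))
    (c : {c : ℕ × ℕ // c ∈ Y}) (h : c.1 ≠ corner Y i) :
    ((extEquiv i hi S) c : ℕ) =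
      (S.1 ⟨c.1, (mem_eraseCell hi c.1).mpr ⟨h, c.2⟩⟩ : Fin _).1 := by
  show ((extEquiv i hi S).toFun c : ℕ) = _
  rw [extEquiv]
  dsimp only
  rw [dif_neg h]

lemma corner_coords {i : ℕ} : (corner Y i).1 = i ∧ (corner Y i).2 = Y.rowLen i - 1 :=
  ⟨rfl, rfl⟩

/-- extension of an SYT preserves standardness -/
def extend (i : ℕ) (hi : i ∈ Rems Y) (S : SYT (eraseCell Y i)) : SYT Y := by
  refine ⟨extEquiv i hi S, ?_⟩
  have hce := card_eraseCell hi
  have hrem := mem_Rems.mp hi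
  have hpos := rowLen_pos_of_Rems hi
  intro c d
  constructor
  · intro hr hlt
    by_cases hdc : d.1 = corner Y i
    · by_cases hcc : c.1 = corner Y i
      · exfalso
        have h1 : c.1.2 = Y.rowLen i - 1 := congrArg Prod.snd hcc
        have h2 : d.1.2 = Y.rowLen i - 1 := congrArg Prod.snd hdc
        omega
      · rw [Fin.lt_def, extEquiv_apply_corner hi S d hdc, extEquiv_apply_ne hi S c hcc]
        have := (S.1 ⟨c.1, (mem_eraseCell hi c.1).mpr ⟨hcc, c.2⟩⟩).2
        omega
    · by_cases hcc : c.1 = corner Y i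
      · exfalso
        have h1 : c.1.1 = i := congrArg Prod.fst hcc
        have h2 : c.1.2 = Y.rowLen i - 1 := congrArg Prod.snd hcc
        have h3 : d.1.2 < Y.rowLen d.1.1 := mem_iff'.mp d.2
        rw [← hr, h1] at h3
        omega
      · rw [Fin.lt_def, extEquiv_apply_ne hi S c hcc, extEquiv_apply_ne hi S d hdc]
        exact (S.2 _ _).1 hr hlt
  · intro hr hlt
    by_cases hdc : d.1 = corner Y i
    · by_cases hcc : c.1 = corner Y i
      · exfalso
        have h1 : c.1.1 = i := congrArg Prod.fst hcc
        have h2 : d.1.1 = i := congrArg Prod.fst hdc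
        omega
      · rw [Fin.lt_def, extEquiv_apply_corner hi S d hdc, extEquiv_apply_ne hi S c hcc]
        have := (S.1 ⟨c.1, (mem_eraseCell hi c.1).mpr ⟨hcc, c.2⟩⟩).2
        omega
    · by_cases hcc : c.1 = corner Y i
      · exfalso
        have h1 : c.1.1 = i := congrArg Prod.fst hcc
        have h2 : c.1.2 = Y.rowLen i - 1 := congrArg Prod.snd hcc
        have h3 : d.1.2 < Y.rowLen d.1.1 := mem_iff'.mp d.2
        have h4 : Y.rowLen d.1.1 ≤ Y.rowLen (i + 1) := Y.rowLen_anti _ _ (by omega)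
        omega
      · rw [Fin.lt_def, extEquiv_apply_ne hi S c hcc, extEquiv_apply_ne hi S d hdc]
        exact (S.2 _ _).2 hr hlt

lemma top_spec (h0 : 0 < Y.card) (T : SYT Y) (c : {c : ℕ × ℕ // c ∈ Y})
    (hc : T.1 c = ⟨Y.card - 1, by omega⟩) :
    c.1.1 ∈ Rems Y ∧ c.1 = corner Y c.1.1 := by
  obtain ⟨⟨i, j⟩, hm⟩ := c
  have hr : (i, j + 1) ∉ Y := by
    intro hmem
    have hlt := (T.2 ⟨(i, j), hm⟩ ⟨(i, j + 1), hmem⟩).1 rfl (Nat.lt_succ_self j)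
    rw [hc] at hlt
    have h3 : Y.card - 1 < ((T.1 ⟨(i, j + 1), hmem⟩ : Fin _) : ℕ) := hlt
    have h2 := (T.1 ⟨(i, j + 1), hmem⟩).2
    omega
  have hd : (i + 1, j) ∉ Y := by
    intro hmem
    have hlt := (T.2 ⟨(i, j), hm⟩ ⟨(i + 1, j), hmem⟩).2 rfl (Nat.lt_succ_self i)
    rw [hc] at hlt
    have h3 : Y.card - 1 < ((T.1 ⟨(i + 1, j), hmem⟩ : Fin _) : ℕ) := hlt
    have h2 := (T.1 ⟨(i + 1, j), hmem⟩).2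
    omega
  have hj : j < Y.rowLen i := YoungDiagram.mem_iff_lt_rowLen.mp hm
  have hj2 : ¬(j + 1 < Y.rowLen i) := fun h => hr (YoungDiagram.mem_iff_lt_rowLen.mpr h)
  have hrow : ¬(j < Y.rowLen (i + 1)) := fun h => hd (YoungDiagram.mem_iff_lt_rowLen.mpr h)
  constructor
  · show i ∈ Rems Y
    exact mem_Rems.mpr (by omega)
  · show (i, j) = corner Y i
    rw [corner, Prod.ext_iff]
    exact ⟨rfl, by omega⟩

set_option maxHeartbeats 2000000 in
/-- restriction of an SYT to the diagram minus its top corner -/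
def restEquiv (i : ℕ) (hi : i ∈ Rems Y) (T : SYT Y) (h0 : 0 < Y.card)
    (htop : (T.1.symm ⟨Y.card - 1, by omega⟩).1 = corner Y i) :
    {c : ℕ × ℕ // c ∈ eraseCell Y i} ≃ Fin (eraseCell Y i).card where
  toFun d :=
    ⟨(T.1 ⟨d.1, ((mem_eraseCell hi d.1).mp d.2).2⟩).1, by
      have hce := card_eraseCell hi
      have h2 := (T.1 ⟨d.1, ((mem_eraseCell hi d.1).mp d.2).2⟩).2
      have hne : (T.1 ⟨d.1, ((mem_eraseCell hi d.1).mp d.2).2⟩).1 ≠ Y.card - 1 := by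
        intro habs
        have : T.1 ⟨d.1, ((mem_eraseCell hi d.1).mp d.2).2⟩ = ⟨Y.card - 1, by omega⟩ :=
          Fin.ext habs
        have h3 := congrArg T.1.symm this
        rw [Equiv.symm_apply_apply] at h3
        have h4 : d.1 = corner Y i := (congrArg Subtype.val h3).trans htop
        exact ((mem_eraseCell hi d.1).mp d.2).1 h4
      omega⟩
  invFun k :=
    ⟨(T.1.symm ⟨k.1, by have hce := card_eraseCell hi; have h2 := k.2; omega⟩).1, by
      rw [mem_eraseCell hi]
      refine ⟨?_, (T.1.symm _).2⟩
      intro habs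
      have h3 : (T.1.symm ⟨k.1, by have hce := card_eraseCell hi; have h2 := k.2; omega⟩) =
          T.1.symm ⟨Y.card - 1, by omega⟩ := by
        apply Subtype.ext
        rw [habs, htop]
      have h4 := congrArg T.1 h3
      rw [Equiv.apply_symm_apply, Equiv.apply_symm_apply] at h4
      have h5 := congrArg Fin.val h4
      dsimp only at h5
      have hce := card_eraseCell hi
      have h2 := k.2
      omega⟩
  left_inv d := by
    apply Subtype.ext
    have h5 := congrArg Subtype.val (symm_mk T.1 ⟨d.1, ((mem_eraseCell hi d.1).mp d.2).2⟩
      (T.1 ⟨d.1, ((mem_eraseCell hi d.1).mp d.2).2⟩).2)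
    exact h5
  right_inv k := by
    apply Fin.ext
    show ((T.1 ⟨_, _⟩ : Fin _) : ℕ) = (k : ℕ)
    rw [app_mk, Equiv.apply_symm_apply]

/-- restriction as an SYT -/
def restrict (i : ℕ) (hi : i ∈ Rems Y) (T : SYT Y) (h0 : 0 < Y.card)
    (htop : (T.1.symm ⟨Y.card - 1, by omega⟩).1 = corner Y i) : SYT (eraseCell Y i) := by
  refine ⟨restEquiv i hi T h0 htop, ?_⟩
  intro c d
  constructor
  · intro hr hlt
    simp only [restEquiv, Equiv.coe_fn_mk, Fin.mk_lt_mk]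
    exact (T.2 ⟨c.1, ((mem_eraseCell hi c.1).mp c.2).2⟩ ⟨d.1, ((mem_eraseCell hi d.1).mp d.2).2⟩).1 hr hlt
  · intro hr hlt
    simp only [restEquiv, Equiv.coe_fn_mk, Fin.mk_lt_mk]
    exact (T.2 ⟨c.1, ((mem_eraseCell hi c.1).mp c.2).2⟩ ⟨d.1, ((mem_eraseCell hi d.1).mp d.2).2⟩).2 hr hlt

end Branch2
section Branch3

variable {Y : YoungDiagram}

/-- assembling extensions over all removable corners -/
def sigmaExtend : (Σ i : {i // i ∈ Rems Y}, SYT (eraseCell Y i.1)) → SYT Y :=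
  fun x => extend x.1.1 x.1.2 x.2

lemma sigmaExtend_injective : Function.Injective (sigmaExtend (Y := Y)) := by
  intro x₁ x₂ h
  obtain ⟨⟨i₁, hi₁⟩, S₁⟩ := x₁
  obtain ⟨⟨i₂, hi₂⟩, S₂⟩ := x₂
  have hE : extEquiv i₁ hi₁ S₁ = extEquiv i₂ hi₂ S₂ := congrArg Subtype.val h
  have hce₁ := card_eraseCell hi₁
  have hce₂ := card_eraseCell hi₂
  have hii : i₁ = i₂ := by
    by_contra hne
    have hc1 : corner Y i₁ ≠ corner Y i₂ := fun habs => hne (congrArg Prod.fst habs)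
    have hv1 : ((extEquiv i₁ hi₁ S₁) ⟨corner Y i₁, corner_mem hi₁⟩ : ℕ) = Y.card - 1 :=
      extEquiv_apply_corner hi₁ S₁ _ rfl
    have hv2 : ((extEquiv i₂ hi₂ S₂) ⟨corner Y i₁, corner_mem hi₁⟩ : ℕ) =
        (S₂.1 ⟨corner Y i₁, (mem_eraseCell hi₂ _).mpr ⟨hc1, corner_mem hi₁⟩⟩ : Fin _).1 :=
      extEquiv_apply_ne hi₂ S₂ _ hc1
    rw [hE] at hv1
    have h3 : ((S₂.1 ⟨corner Y i₁, (mem_eraseCell hi₂ _).mpr ⟨hc1, corner_mem hi₁⟩⟩ : Fin _) : ℕ)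
        < (eraseCell Y i₂).card :=
      (S₂.1 ⟨corner Y i₁, (mem_eraseCell hi₂ _).mpr ⟨hc1, corner_mem hi₁⟩⟩).2
    omega
  subst hii
  have hSS : S₁ = S₂ := by
    apply Subtype.ext
    apply Equiv.ext
    intro d
    have hd : d.1 ≠ corner Y i₁ := ((mem_eraseCell hi₁ d.1).mp d.2).1
    have hdY : d.1 ∈ Y := ((mem_eraseCell hi₁ d.1).mp d.2).2
    have h1 : ((extEquiv i₁ hi₁ S₁) ⟨d.1, hdY⟩ : ℕ) =
        (S₁.1 ⟨d.1, (mem_eraseCell hi₁ d.1).mpr ⟨hd, hdY⟩⟩ : Fin _).1 :=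
      extEquiv_apply_ne hi₁ S₁ _ hd
    have h2 : ((extEquiv i₁ hi₂ S₂) ⟨d.1, hdY⟩ : ℕ) =
        (S₂.1 ⟨d.1, (mem_eraseCell hi₁ d.1).mpr ⟨hd, hdY⟩⟩ : Fin _).1 :=
      extEquiv_apply_ne hi₂ S₂ _ hd
    rw [hE] at h1
    rw [h2] at h1
    apply Fin.ext
    have e1 : S₁.1 ⟨d.1, (mem_eraseCell hi₁ d.1).mpr ⟨hd, hdY⟩⟩ = S₁.1 d := app_mk S₁.1 d _
    have e2 : S₂.1 ⟨d.1, (mem_eraseCell hi₁ d.1).mpr ⟨hd, hdY⟩⟩ = S₂.1 d := app_mk S₂.1 d _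
    rw [← e1, ← e2]
    exact h1.symm
  rw [hSS]

lemma sigmaExtend_surjective (h0 : 0 < Y.card) :
    Function.Surjective (sigmaExtend (Y := Y)) := by
  intro T
  have hlt : Y.card - 1 < Y.card := by omega
  have hspec := top_spec h0 T (T.1.symm ⟨Y.card - 1, hlt⟩)
    ((Equiv.apply_symm_apply _ _).trans (Fin.ext rfl))
  obtain ⟨hrem, hcor⟩ := hspec
  refine ⟨⟨⟨(T.1.symm ⟨Y.card - 1, hlt⟩).1.1, hrem⟩,
    restrict (T.1.symm ⟨Y.card - 1, hlt⟩).1.1 hrem T h0 hcor⟩, ?_⟩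
  apply Subtype.ext
  apply Equiv.ext
  intro c
  apply Fin.ext
  by_cases h : c.1 = corner Y (T.1.symm ⟨Y.card - 1, hlt⟩).1.1
  · show ((extEquiv _ hrem (restrict _ hrem T h0 hcor)) c : ℕ) = ((T.1 c : Fin _) : ℕ)
    rw [extEquiv_apply_corner hrem _ c h]
    have hcc : c = T.1.symm ⟨Y.card - 1, hlt⟩ := Subtype.ext (h.trans hcor.symm)
    rw [hcc, Equiv.apply_symm_apply]
  · show ((extEquiv _ hrem (restrict _ hrem T h0 hcor)) c : ℕ) = ((T.1 c : Fin _) : ℕ)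
    rw [extEquiv_apply_ne hrem _ c h]
    show ((restEquiv _ hrem T h0 hcor) ⟨c.1, _⟩ : ℕ) = _
    simp only [restEquiv, Equiv.coe_fn_mk]

lemma g_branch (h0 : 0 < Y.card) : g Y = ∑ i ∈ Rems Y, g (eraseCell Y i) := by
  classical
  have h1 : Nat.card (Σ i : {i // i ∈ Rems Y}, SYT (eraseCell Y i.1)) = Nat.card (SYT Y) :=
    Nat.card_eq_of_bijective _ ⟨sigmaExtend_injective, sigmaExtend_surjective h0⟩
  haveI : ∀ Z : YoungDiagram, Fintype (SYT Z) := fun Z => Fintype.ofFinite _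
  rw [g, ← h1, Nat.card_eq_fintype_card, Fintype.card_sigma,
    ← Finset.sum_coe_sort (Rems Y) (fun i => g (eraseCell Y i))]
  apply Finset.sum_congr rfl
  intro i _
  rw [g, Nat.card_eq_fintype_card]

end Branch3
section Counting

instance : @DecidableRel YoungDiagram YoungDiagram (· ≤ ·) := fun Z Y =>
  decidable_of_iff (Z.cells ⊆ Y.cells) YoungDiagram.cells_subset_iff

instance (Z Y : YoungDiagram) : Decidable (cov Z Y) := by
  unfold cov; infer_instance

lemma ite_sum_zero {α : Type*} {P : Prop} [Decidable P] {s : Finset α} (f : α → ℕ) :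
    (if P then ∑ x ∈ s, f x else 0) = ∑ x ∈ s, if P then f x else 0 := by
  split_ifs with h
  · rfl
  · simp

lemma ite_and_assoc {P Q : Prop} [Decidable P] [Decidable Q] (x : ℕ) :
    (if P then (if Q then x else 0) else 0) = if P ∧ Q then x else 0 := by
  by_cases hP : P <;> by_cases hQ : Q <;> simp [hP, hQ]

lemma ite_mul_one' {P : Prop} [Decidable P] (x : ℕ) :
    (if P then x else 0) = x * (if P then 1 else 0) := by
  split_ifs <;> simp

/-- a partition whose shape is a given diagram of matching size -/
noncomputable def pchoose {k : ℕ} (Z : YoungDiagram) (h : Z.card = k) : Nat.Partition k :=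
  (shapeOf_surj Z h).choose

lemma pchoose_spec {k : ℕ} (Z : YoungDiagram) (h : Z.card = k) :
    shapeOf (pchoose Z h) = Z :=
  (shapeOf_surj Z h).choose_spec

lemma W1 {k : ℕ} {Y : YoungDiagram} (hY : Y.card = k + 1) (w : YoungDiagram → ℕ) :
    (∑ σ : Nat.Partition k, if cov (shapeOf σ) Y then w (shapeOf σ) else 0)
      = ∑ i ∈ Rems Y, w (eraseCell Y i) := by
  classical
  rw [← Finset.sum_filter]
  symm
  refine Finset.sum_bij (fun a ha => pchoose (eraseCell Y a)
      (show (eraseCell Y a).card = k by have := card_eraseCell ha; omega)) ?_ ?_ ?_ ?_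
  · intro a ha
    have hspec := pchoose_spec (eraseCell Y a)
      (show (eraseCell Y a).card = k by have := card_eraseCell ha; omega)
    simp only [Finset.mem_filter, Finset.mem_univ, true_and]
    rw [hspec]
    exact cov_eraseCell ha
  · intro a1 h1 a2 h2 he
    have hs1 := pchoose_spec (eraseCell Y a1)
      (show (eraseCell Y a1).card = k by have := card_eraseCell h1; omega)
    have hs2 := pchoose_spec (eraseCell Y a2)
      (show (eraseCell Y a2).card = k by have := card_eraseCell h2; omega)
    apply eraseCell_inj h1 h2
    rw [← hs1, ← hs2]
    exact congrArg shapeOf he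
  · intro σ hσ
    simp only [Finset.mem_filter, Finset.mem_univ, true_and] at hσ
    obtain ⟨j, hj, hje⟩ := cocover_exists hσ
    refine ⟨j, hj, ?_⟩
    apply shapeOf_injective
    have hs := pchoose_spec (eraseCell Y j)
      (show (eraseCell Y j).card = k by have := card_eraseCell hj; omega)
    rw [hs, ← hje]
  · intro a ha
    have hspec := pchoose_spec (eraseCell Y a)
      (show (eraseCell Y a).card = k by have := card_eraseCell ha; omega)
    rw [hspec]

lemma W2 {k : ℕ} {N : YoungDiagram} (hN : N.card = k) (w : YoungDiagram → ℕ) :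
    (∑ μ : Nat.Partition (k + 1), if cov N (shapeOf μ) then w (shapeOf μ) else 0)
      = ∑ i ∈ Adds N, w (addCell N i) := by
  classical
  rw [← Finset.sum_filter]
  symm
  refine Finset.sum_bij (fun a ha => pchoose (addCell N a)
      (show (addCell N a).card = k + 1 by have := card_addCell ha; omega)) ?_ ?_ ?_ ?_
  · intro a ha
    have hspec := pchoose_spec (addCell N a)
      (show (addCell N a).card = k + 1 by have := card_addCell ha; omega)
    simp only [Finset.mem_filter, Finset.mem_univ, true_and]
    rw [hspec]
    exact cov_addCell ha
  · intro a1 h1 a2 h2 he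
    have hs1 := pchoose_spec (addCell N a1)
      (show (addCell N a1).card = k + 1 by have := card_addCell h1; omega)
    have hs2 := pchoose_spec (addCell N a2)
      (show (addCell N a2).card = k + 1 by have := card_addCell h2; omega)
    apply addCell_inj h1 h2
    rw [← hs1, ← hs2]
    exact congrArg shapeOf he
  · intro μ hμ
    simp only [Finset.mem_filter, Finset.mem_univ, true_and] at hμ
    obtain ⟨j, hj, hje⟩ := cover_exists hμ
    refine ⟨j, hj, ?_⟩
    apply shapeOf_injective
    have hs := pchoose_spec (addCell N j)
      (show (addCell N j).card = k + 1 by have := card_addCell hj; omega)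
    rw [hs, ← hje]
  · intro a ha
    have hspec := pchoose_spec (addCell N a)
      (show (addCell N a).card = k + 1 by have := card_addCell ha; omega)
    rw [hspec]

/-- branching rule over partitions -/
lemma L1' {k : ℕ} {Y : YoungDiagram} (hY : Y.card = k + 1) :
    g Y = ∑ σ : Nat.Partition k, if cov (shapeOf σ) Y then g (shapeOf σ) else 0 := by
  rw [W1 hY g]
  exact g_branch (by omega)

lemma card_bot : (⊥ : YoungDiagram).card = 0 := by
  show (⊥ : YoungDiagram).cells.card = 0
  rw [YoungDiagram.cells_bot]
  rfl

lemma g_bot : g ⊥ = 1 := by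
  haveI hie : IsEmpty {c : ℕ × ℕ // c ∈ (⊥ : YoungDiagram)} :=
    ⟨fun x => YoungDiagram.notMem_bot _ x.2⟩
  haveI hfe : IsEmpty (Fin ((⊥ : YoungDiagram).card)) := by
    rw [card_bot]
    infer_instance
  have hne : Nonempty (SYT ⊥) :=
    ⟨⟨Equiv.equivOfIsEmpty _ _, fun c _ => absurd c.2 (YoungDiagram.notMem_bot _)⟩⟩
  have hsub : Subsingleton (SYT ⊥) := by
    constructor
    intro T₁ T₂
    apply Subtype.ext
    apply Equiv.ext
    intro c
    exact absurd c.2 (YoungDiagram.notMem_bot _)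
  rw [g]
  exact Nat.card_unique

lemma shapeOf_zero (ν : Nat.Partition 0) : shapeOf ν = ⊥ := by
  have hp : ν.parts = 0 := by
    apply Multiset.eq_zero_of_forall_notMem
    intro a ha
    have h1 := ν.parts_pos ha
    have h2 := Multiset.single_le_sum (fun x _ => Nat.zero_le x) a ha
    rw [ν.parts_sum] at h2
    omega
  apply SetLike.ext
  intro c
  rw [shapeOf]
  constructor
  · intro hc
    rw [YoungDiagram.mem_ofRowLens] at hc
    obtain ⟨h1, -⟩ := hc
    rw [hp] at h1
    simp at h1
  · intro hc
    exact absurd hc (YoungDiagram.notMem_bot _)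

end Counting
section Main

lemma card_sup_inf (N R : YoungDiagram) :
    (N ⊔ R).card + (N ⊓ R).card = N.card + R.card := by
  show (N ⊔ R).cells.card + (N ⊓ R).cells.card = _
  rw [YoungDiagram.cells_sup, YoungDiagram.cells_inf]
  exact Finset.card_union_add_card_inter _ _

lemma common_up_eq_down {n : ℕ} (ν ρ : Nat.Partition (n + 1)) (hne : ν ≠ ρ) :
    (∑ μ : Nat.Partition (n + 2),
        if cov (shapeOf ν) (shapeOf μ) ∧ cov (shapeOf ρ) (shapeOf μ) then (1 : ℕ) else 0)
      = ∑ σ : Nat.Partition n,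
        if cov (shapeOf σ) (shapeOf ν) ∧ cov (shapeOf σ) (shapeOf ρ) then (1 : ℕ) else 0 := by
  classical
  have hNe : shapeOf ν ≠ shapeOf ρ := fun h => hne (shapeOf_injective h)
  have hcN : (shapeOf ν).card = n + 1 := card_shapeOf ν
  have hcR : (shapeOf ρ).card = n + 1 := card_shapeOf ρ
  have hsum := card_sup_inf (shapeOf ν) (shapeOf ρ)
  have hsup_ge : n + 2 ≤ (shapeOf ν ⊔ shapeOf ρ).card := by
    have h1 : shapeOf ν ≤ shapeOf ν ⊔ shapeOf ρ := le_sup_left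
    have h2 := card_le_of_le h1
    rcases Nat.eq_or_lt_of_le h2 with he | hlt
    · exfalso
      have h3 : shapeOf ν = shapeOf ν ⊔ shapeOf ρ := yd_eq_of_le_card h1 (by omega)
      have h4 : shapeOf ρ ≤ shapeOf ν := h3 ▸ le_sup_right
      exact hNe (yd_eq_of_le_card h4 (by omega)).symm
    · omega
  have hinf_le : (shapeOf ν ⊓ shapeOf ρ).card ≤ n := by omega
  have lhs_eq : (∑ μ : Nat.Partition (n + 2),
      if cov (shapeOf ν) (shapeOf μ) ∧ cov (shapeOf ρ) (shapeOf μ) then (1 : ℕ) else 0)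
      = if (shapeOf ν ⊔ shapeOf ρ).card = n + 2 then 1 else 0 := by
    by_cases h : (shapeOf ν ⊔ shapeOf ρ).card = n + 2
    · rw [if_pos h]
      have hspec := pchoose_spec (shapeOf ν ⊔ shapeOf ρ) h
      have hiff : ∀ μ : Nat.Partition (n + 2),
          (cov (shapeOf ν) (shapeOf μ) ∧ cov (shapeOf ρ) (shapeOf μ)) ↔
            μ = pchoose (shapeOf ν ⊔ shapeOf ρ) h := by
        intro μ
        constructor
        · rintro ⟨h1, h2⟩
          have hle : shapeOf ν ⊔ shapeOf ρ ≤ shapeOf μ := sup_le h1.1 h2.1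
          have hcμ := card_shapeOf μ
          have heq : shapeOf ν ⊔ shapeOf ρ = shapeOf μ :=
            yd_eq_of_le_card hle (by omega)
          apply shapeOf_injective
          rw [hspec, heq]
        · rintro rfl
          rw [hspec]
          exact ⟨⟨le_sup_left, by omega⟩, ⟨le_sup_right, by omega⟩⟩
      calc (∑ μ : Nat.Partition (n + 2),
          if cov (shapeOf ν) (shapeOf μ) ∧ cov (shapeOf ρ) (shapeOf μ) then (1 : ℕ) else 0)
          = ∑ μ : Nat.Partition (n + 2),
            if μ = pchoose (shapeOf ν ⊔ shapeOf ρ) h then (1 : ℕ) else 0 :=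
            Finset.sum_congr rfl (fun μ _ => if_congr (hiff μ) rfl rfl)
        _ = 1 := Fintype.sum_ite_eq' _ (fun _ => (1 : ℕ))
    · rw [if_neg h]
      apply Finset.sum_eq_zero
      intro μ _
      rw [if_neg]
      rintro ⟨h1, h2⟩
      have hle : shapeOf ν ⊔ shapeOf ρ ≤ shapeOf μ := sup_le h1.1 h2.1
      have h3 := card_le_of_le hle
      have hcμ := card_shapeOf μ
      omega
  have rhs_eq : (∑ σ : Nat.Partition n,
      if cov (shapeOf σ) (shapeOf ν) ∧ cov (shapeOf σ) (shapeOf ρ) then (1 : ℕ) else 0)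
      = if (shapeOf ν ⊓ shapeOf ρ).card = n then 1 else 0 := by
    by_cases h : (shapeOf ν ⊓ shapeOf ρ).card = n
    · rw [if_pos h]
      have hspec := pchoose_spec (shapeOf ν ⊓ shapeOf ρ) h
      have hiff : ∀ σ : Nat.Partition n,
          (cov (shapeOf σ) (shapeOf ν) ∧ cov (shapeOf σ) (shapeOf ρ)) ↔
            σ = pchoose (shapeOf ν ⊓ shapeOf ρ) h := by
        intro σ
        constructor
        · rintro ⟨h1, h2⟩
          have hle : shapeOf σ ≤ shapeOf ν ⊓ shapeOf ρ := le_inf h1.1 h2.1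
          have hcσ := card_shapeOf σ
          have heq : shapeOf σ = shapeOf ν ⊓ shapeOf ρ :=
            yd_eq_of_le_card hle (by omega)
          apply shapeOf_injective
          rw [hspec, heq]
        · rintro rfl
          rw [hspec]
          exact ⟨⟨inf_le_left, by omega⟩, ⟨inf_le_right, by omega⟩⟩
      calc (∑ σ : Nat.Partition n,
          if cov (shapeOf σ) (shapeOf ν) ∧ cov (shapeOf σ) (shapeOf ρ) then (1 : ℕ) else 0)
          = ∑ σ : Nat.Partition n,
            if σ = pchoose (shapeOf ν ⊓ shapeOf ρ) h then (1 : ℕ) else 0 :=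
            Finset.sum_congr rfl (fun σ _ => if_congr (hiff σ) rfl rfl)
        _ = 1 := Fintype.sum_ite_eq' _ (fun _ => (1 : ℕ))
    · rw [if_neg h]
      apply Finset.sum_eq_zero
      intro σ _
      rw [if_neg]
      rintro ⟨h1, h2⟩
      have hle : shapeOf σ ≤ shapeOf ν ⊓ shapeOf ρ := le_inf h1.1 h2.1
      have h3 := card_le_of_le hle
      have hcσ := card_shapeOf σ
      omega
  rw [lhs_eq, rhs_eq]
  exact if_congr (by omega) rfl rfl

lemma u_self {k : ℕ} (ν : Nat.Partition k) :
    (∑ μ : Nat.Partition (k + 1), if cov (shapeOf ν) (shapeOf μ) then (1 : ℕ) else 0)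
      = (Adds (shapeOf ν)).card := by
  rw [W2 (card_shapeOf ν) (fun _ => 1)]
  simp

lemma d_self {k : ℕ} (ν : Nat.Partition (k + 1)) :
    (∑ σ : Nat.Partition k, if cov (shapeOf σ) (shapeOf ν) then (1 : ℕ) else 0)
      = (Rems (shapeOf ν)).card := by
  rw [W1 (card_shapeOf ν) (fun _ => 1)]
  simp

lemma L3 : ∀ (n : ℕ) (ν : Nat.Partition n),
    (∑ μ : Nat.Partition (n + 1), if cov (shapeOf ν) (shapeOf μ) then g (shapeOf μ) else 0)
      = (n + 1) * g (shapeOf ν) := by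
  intro n
  induction n with
  | zero =>
    intro ν
    have hbot : shapeOf ν = ⊥ := shapeOf_zero ν
    have hone : ∀ μ : Nat.Partition 1, cov (shapeOf ν) (shapeOf μ) := fun μ =>
      ⟨hbot ▸ bot_le, by rw [card_shapeOf, hbot, card_bot]⟩
    have hg : ∀ μ : Nat.Partition 1, g (shapeOf μ) = 1 := by
      intro μ
      rw [L1' (k := 0) (card_shapeOf μ)]
      rw [Finset.univ_unique, Finset.sum_singleton]
      rw [if_pos, shapeOf_zero, g_bot]
      constructor
      · rw [shapeOf_zero]; exact bot_le
      · rw [card_shapeOf, shapeOf_zero, card_bot]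
    calc (∑ μ : Nat.Partition 1, if cov (shapeOf ν) (shapeOf μ) then g (shapeOf μ) else 0)
        = ∑ _μ : Nat.Partition 1, 1 :=
          Finset.sum_congr rfl (fun μ _ => by rw [if_pos (hone μ), hg μ])
      _ = 1 := by rw [Finset.univ_unique, Finset.sum_singleton]
      _ = (0 + 1) * g (shapeOf ν) := by rw [hbot, g_bot]
  | succ n ih =>
    intro ν
    have hcν : (shapeOf ν).card = n + 1 := card_shapeOf ν
    calc (∑ μ : Nat.Partition (n + 2),
          if cov (shapeOf ν) (shapeOf μ) then g (shapeOf μ) else 0)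
        = ∑ μ : Nat.Partition (n + 2), if cov (shapeOf ν) (shapeOf μ) then
            (∑ ρ : Nat.Partition (n + 1),
              if cov (shapeOf ρ) (shapeOf μ) then g (shapeOf ρ) else 0) else 0 :=
          Finset.sum_congr rfl (fun μ _ => if_congr Iff.rfl (L1' (card_shapeOf μ)) rfl)
      _ = ∑ μ : Nat.Partition (n + 2), ∑ ρ : Nat.Partition (n + 1),
            if cov (shapeOf ν) (shapeOf μ) ∧ cov (shapeOf ρ) (shapeOf μ) then
              g (shapeOf ρ) else 0 := by
          apply Finset.sum_congr rfl
          intro μ _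
          rw [_root_.ite_sum_zero]
          exact Finset.sum_congr rfl (fun ρ _ => ite_and_assoc _)
      _ = ∑ ρ : Nat.Partition (n + 1), ∑ μ : Nat.Partition (n + 2),
            if cov (shapeOf ν) (shapeOf μ) ∧ cov (shapeOf ρ) (shapeOf μ) then
              g (shapeOf ρ) else 0 := Finset.sum_comm
      _ = ∑ ρ : Nat.Partition (n + 1), g (shapeOf ρ) *
            ∑ μ : Nat.Partition (n + 2),
              if cov (shapeOf ν) (shapeOf μ) ∧ cov (shapeOf ρ) (shapeOf μ) then 1 else 0 := by
          apply Finset.sum_congr rfl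
          intro ρ _
          rw [Finset.mul_sum]
          exact Finset.sum_congr rfl (fun μ _ => ite_mul_one' _)
      _ = ∑ ρ : Nat.Partition (n + 1), g (shapeOf ρ) *
            ((∑ σ : Nat.Partition n,
              if cov (shapeOf σ) (shapeOf ν) ∧ cov (shapeOf σ) (shapeOf ρ) then 1 else 0)
              + if ρ = ν then 1 else 0) := by
          apply Finset.sum_congr rfl
          intro ρ _
          congr 1
          by_cases hρν : ρ = ν
          · subst hρν
            rw [if_pos rfl]
            have e1 : (∑ μ : Nat.Partition (n + 2),
                if cov (shapeOf ρ) (shapeOf μ) ∧ cov (shapeOf ρ) (shapeOf μ) then (1:ℕ) else 0)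
                = ∑ μ : Nat.Partition (n + 2),
                  if cov (shapeOf ρ) (shapeOf μ) then (1:ℕ) else 0 :=
              Finset.sum_congr rfl (fun μ _ => if_congr (and_self_iff) rfl rfl)
            have e2 : (∑ σ : Nat.Partition n,
                if cov (shapeOf σ) (shapeOf ρ) ∧ cov (shapeOf σ) (shapeOf ρ) then (1:ℕ) else 0)
                = ∑ σ : Nat.Partition n,
                  if cov (shapeOf σ) (shapeOf ρ) then (1:ℕ) else 0 :=
              Finset.sum_congr rfl (fun σ _ => if_congr (and_self_iff) rfl rfl)
            rw [e1, e2, u_self, d_self, card_Adds]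
          · rw [if_neg hρν, add_zero]
            exact common_up_eq_down ν ρ (fun h => hρν h.symm)
      _ = (∑ ρ : Nat.Partition (n + 1), g (shapeOf ρ) *
            ∑ σ : Nat.Partition n,
              if cov (shapeOf σ) (shapeOf ν) ∧ cov (shapeOf σ) (shapeOf ρ) then 1 else 0)
            + ∑ ρ : Nat.Partition (n + 1), g (shapeOf ρ) * (if ρ = ν then 1 else 0) := by
          rw [← Finset.sum_add_distrib]
          exact Finset.sum_congr rfl (fun ρ _ => mul_add _ _ _)
      _ = (∑ ρ : Nat.Partition (n + 1), g (shapeOf ρ) *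
            ∑ σ : Nat.Partition n,
              if cov (shapeOf σ) (shapeOf ν) ∧ cov (shapeOf σ) (shapeOf ρ) then 1 else 0)
            + g (shapeOf ν) := by
          congr 1
          have hterm : ∀ ρ : Nat.Partition (n + 1),
              g (shapeOf ρ) * (if ρ = ν then 1 else 0) = if ρ = ν then g (shapeOf ρ) else 0 :=
            fun ρ => by split_ifs <;> simp
          rw [Finset.sum_congr rfl (fun ρ _ => hterm ρ)]
          exact Fintype.sum_ite_eq' ν (fun ρ => g (shapeOf ρ))
      _ = ((n + 1) * g (shapeOf ν)) + g (shapeOf ν) := by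
          congr 1
          calc (∑ ρ : Nat.Partition (n + 1), g (shapeOf ρ) *
                ∑ σ : Nat.Partition n,
                  if cov (shapeOf σ) (shapeOf ν) ∧ cov (shapeOf σ) (shapeOf ρ) then 1 else 0)
              = ∑ ρ : Nat.Partition (n + 1), ∑ σ : Nat.Partition n,
                  if cov (shapeOf σ) (shapeOf ν) ∧ cov (shapeOf σ) (shapeOf ρ) then
                    g (shapeOf ρ) else 0 := by
                apply Finset.sum_congr rfl
                intro ρ _
                rw [Finset.mul_sum]
                exact Finset.sum_congr rfl (fun σ _ => (ite_mul_one' _).symm)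
            _ = ∑ σ : Nat.Partition n, ∑ ρ : Nat.Partition (n + 1),
                  if cov (shapeOf σ) (shapeOf ν) ∧ cov (shapeOf σ) (shapeOf ρ) then
                    g (shapeOf ρ) else 0 := Finset.sum_comm
            _ = ∑ σ : Nat.Partition n, if cov (shapeOf σ) (shapeOf ν) then
                  (∑ ρ : Nat.Partition (n + 1),
                    if cov (shapeOf σ) (shapeOf ρ) then g (shapeOf ρ) else 0) else 0 := by
                apply Finset.sum_congr rfl
                intro σ _
                rw [_root_.ite_sum_zero]
                exact Finset.sum_congr rfl (fun ρ _ => (ite_and_assoc _).symm)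
            _ = ∑ σ : Nat.Partition n, if cov (shapeOf σ) (shapeOf ν) then
                  ((n + 1) * g (shapeOf σ)) else 0 :=
                Finset.sum_congr rfl (fun σ _ => if_congr Iff.rfl (ih σ) rfl)
            _ = (n + 1) * ∑ σ : Nat.Partition n,
                  if cov (shapeOf σ) (shapeOf ν) then g (shapeOf σ) else 0 := by
                rw [Finset.mul_sum]
                exact Finset.sum_congr rfl (fun σ _ => by split_ifs <;> simp)
            _ = (n + 1) * g (shapeOf ν) := by
                rw [← L1' (k := n) (by have := card_shapeOf ν; omega)]
      _ = (n + 1 + 1) * g (shapeOf ν) := by ring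

theorem factorial_eq_sum_sq_SYT' (m : ℕ) :
    m.factorial = ∑ μ : Nat.Partition m, (g (shapeOf μ)) ^ 2 := by
  induction m with
  | zero =>
    rw [Nat.factorial_zero, Finset.univ_unique, Finset.sum_singleton, shapeOf_zero, g_bot]
    norm_num
  | succ n ih =>
    rw [Nat.factorial_succ, ih]
    calc (n + 1) * ∑ ν : Nat.Partition n, g (shapeOf ν) ^ 2
        = ∑ ν : Nat.Partition n, g (shapeOf ν) * ((n + 1) * g (shapeOf ν)) := by
          rw [Finset.mul_sum]
          exact Finset.sum_congr rfl (fun ν _ => by ring)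
      _ = ∑ ν : Nat.Partition n, g (shapeOf ν) *
            (∑ μ : Nat.Partition (n + 1),
              if cov (shapeOf ν) (shapeOf μ) then g (shapeOf μ) else 0) :=
          Finset.sum_congr rfl (fun ν _ => by rw [L3 n ν])
      _ = ∑ ν : Nat.Partition n, ∑ μ : Nat.Partition (n + 1),
            if cov (shapeOf ν) (shapeOf μ) then g (shapeOf ν) * g (shapeOf μ) else 0 := by
          apply Finset.sum_congr rfl
          intro ν _
          rw [Finset.mul_sum]
          exact Finset.sum_congr rfl (fun μ _ => by split_ifs <;> simp)
      _ = ∑ μ : Nat.Partition (n + 1), ∑ ν : Nat.Partition n,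
            if cov (shapeOf ν) (shapeOf μ) then g (shapeOf ν) * g (shapeOf μ) else 0 :=
          Finset.sum_comm
      _ = ∑ μ : Nat.Partition (n + 1), g (shapeOf μ) *
            (∑ ν : Nat.Partition n,
              if cov (shapeOf ν) (shapeOf μ) then g (shapeOf ν) else 0) := by
          apply Finset.sum_congr rfl
          intro μ _
          rw [Finset.mul_sum]
          exact Finset.sum_congr rfl (fun ν _ => by split_ifs <;> ring)
      _ = ∑ μ : Nat.Partition (n + 1), g (shapeOf μ) * g (shapeOf μ) := by
          apply Finset.sum_congr rfl
          intro μ _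
          rw [← L1' (k := n) (by have := card_shapeOf μ; omega)]
      _ = ∑ μ : Nat.Partition (n + 1), g (shapeOf μ) ^ 2 :=
          Finset.sum_congr rfl (fun μ _ => by ring)

/-- `m! = ∑_{μ ⊢ m} (f^μ)²`. -/
theorem factorial_eq_sum_sq_SYT (m : ℕ) :
    m.factorial = ∑ μ : Nat.Partition m, (fSYT m μ) ^ 2 := by
  rw [factorial_eq_sum_sq_SYT' m]
  exact Finset.sum_congr rfl (fun μ _ => by rw [fSYT_eq_g])

end Main
end

section
/- For natural numbers k and m ≤ k with k − m even, the number of perfect matchings of a set of size k − m (equivalently, ways to pair up k−m points) is (k−m−1)!!, and ∑_{m ≡ k (mod 2), 0 ≤ m ≤ k} (C(k,m)·(k−m−1)!!)^2 · m! = (2k−1)!!. -/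
/-- A perfect matching of `Fin j`: a collection of blocks of size `2` such that every
element lies in exactly one block. -/
def IsPerfectMatching {j : ℕ} (M : Finset (Finset (Fin j))) : Prop :=
  (∀ B ∈ M, B.card = 2) ∧ ∀ x : Fin j, ∃! B, B ∈ M ∧ x ∈ B

section AuxProof

open Finset Nat

set_option linter.unusedSectionVars false

variable {α : Type*} [DecidableEq α]

open scoped Classical in
noncomputable def matchings (s : Finset α) : Finset (Finset (Finset α)) :=
  s.powerset.powerset.filter
    (fun M => (∀ B ∈ M, B.card = 2) ∧ ∀ x ∈ s, ∃! B, B ∈ M ∧ x ∈ B)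

lemma mem_matchings {s : Finset α} {M : Finset (Finset α)} :
    M ∈ matchings s ↔ (∀ B ∈ M, B ⊆ s) ∧ (∀ B ∈ M, B.card = 2) ∧
      ∀ x ∈ s, ∃! B, B ∈ M ∧ x ∈ B := by
  classical
  simp only [matchings, Finset.mem_filter, Finset.mem_powerset, Finset.subset_iff]

lemma matchings_empty : matchings (∅ : Finset α) = {∅} := by
  ext M
  simp only [mem_matchings, Finset.mem_singleton]
  constructor
  · rintro ⟨h1, h2, _⟩
    by_contra hne
    obtain ⟨B, hB⟩ := Finset.nonempty_iff_ne_empty.mpr hne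
    have := h1 B hB
    have hc := h2 B hB
    have : B = ∅ := Finset.subset_empty.mp (h1 B hB)
    rw [this] at hc
    simp at hc
  · rintro rfl
    refine ⟨by simp, by simp, by simp⟩

lemma matchings_decomp (s : Finset α) (a : α) (ha : a ∈ s) :
    matchings s = (s.erase a).biUnion
      (fun b => (matchings ((s.erase a).erase b)).image (insert {a, b})) := by
  ext M
  simp only [Finset.mem_biUnion, Finset.mem_image]
  constructor
  · intro hM
    obtain ⟨hsub, hcard, huniq⟩ := mem_matchings.mp hM
    obtain ⟨B, ⟨hBM, haB⟩, hBuniq⟩ := huniq a ha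
    obtain ⟨b, hba, rfl⟩ : ∃ b, b ≠ a ∧ B = {a, b} := by
      obtain ⟨x, y, hxy, rfl⟩ := Finset.card_eq_two.mp (hcard B hBM)
      rcases Finset.mem_insert.mp haB with rfl | h
      · exact ⟨y, fun h => hxy h.symm, rfl⟩
      · rcases Finset.mem_singleton.mp h with rfl
        exact ⟨x, fun h => hxy h, Finset.pair_comm x a⟩
    have hbs : b ∈ s := hsub _ hBM (by simp)
    refine ⟨b, Finset.mem_erase.mpr ⟨hba, hbs⟩, M.erase {a, b}, ?_, Finset.insert_erase hBM⟩
    obtain ⟨D, ⟨hDM, hbD⟩, hDu⟩ := huniq b hbs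
    have hDab : ({a, b} : Finset α) = D := hDu _ ⟨hBM, by simp⟩
    refine mem_matchings.mpr ⟨?_, ?_, ?_⟩
    · intro C hC
      have hCM := Finset.mem_of_mem_erase hC
      have hCB : C ≠ {a, b} := Finset.ne_of_mem_erase hC
      intro x hx
      refine Finset.mem_erase.mpr ⟨?_, Finset.mem_erase.mpr ⟨?_, hsub C hCM hx⟩⟩
      · rintro rfl
        exact hCB (hDu C ⟨hCM, hx⟩ |>.trans hDab.symm)
      · rintro rfl
        exact hCB (hBuniq C ⟨hCM, hx⟩)
    · exact fun C hC => hcard C (Finset.mem_of_mem_erase hC)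
    · intro x hx
      have hx1 : x ≠ b := (Finset.mem_erase.mp hx).1
      have hx2 : x ≠ a := (Finset.mem_erase.mp (Finset.mem_erase.mp hx).2).1
      have hxs : x ∈ s := (Finset.mem_erase.mp (Finset.mem_erase.mp hx).2).2
      obtain ⟨D', ⟨hD'M, hxD'⟩, hD'u⟩ := huniq x hxs
      have hD'ne : D' ≠ {a, b} := by
        rintro rfl
        rcases Finset.mem_insert.mp hxD' with rfl | h
        · exact hx2 rfl
        · exact hx1 (Finset.mem_singleton.mp h)
      refine ⟨D', ⟨Finset.mem_erase.mpr ⟨hD'ne, hD'M⟩, hxD'⟩, ?_⟩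
      rintro C ⟨hC, hxC⟩
      exact hD'u C ⟨Finset.mem_of_mem_erase hC, hxC⟩
  · rintro ⟨b, hb, M', hM', rfl⟩
    have hba : b ≠ a := (Finset.mem_erase.mp hb).1
    have hbs : b ∈ s := (Finset.mem_erase.mp hb).2
    obtain ⟨h1, h2, h3⟩ := mem_matchings.mp hM'
    have hblocks : ∀ C ∈ M', a ∉ C ∧ b ∉ C := by
      intro C hC
      constructor
      · intro haC
        exact (Finset.mem_erase.mp (Finset.mem_erase.mp (h1 C hC haC)).2).1 rfl
      · intro hbC
        exact (Finset.mem_erase.mp (h1 C hC hbC)).1 rfl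
    refine mem_matchings.mpr ⟨?_, ?_, ?_⟩
    · intro C hC
      rcases Finset.mem_insert.mp hC with rfl | hC'
      · intro x hx
        rcases Finset.mem_insert.mp hx with rfl | h
        · exact ha
        · rw [Finset.mem_singleton.mp h]; exact hbs
      · exact (h1 C hC').trans ((Finset.erase_subset _ _).trans (Finset.erase_subset _ _))
    · intro C hC
      rcases Finset.mem_insert.mp hC with rfl | hC'
      · exact Finset.card_pair (Ne.symm hba)
      · exact h2 C hC'
    · intro x hxs
      by_cases hx : x = a ∨ x = b
      · refine ⟨{a, b}, ⟨Finset.mem_insert_self _ _, by rcases hx with rfl | rfl <;> simp⟩, ?_⟩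
        rintro C ⟨hC, hxC⟩
        rcases Finset.mem_insert.mp hC with rfl | hC'
        · rfl
        · exfalso
          rcases hx with rfl | rfl
          · exact (hblocks C hC').1 hxC
          · exact (hblocks C hC').2 hxC
      · push_neg at hx
        have hxt : x ∈ (s.erase a).erase b :=
          Finset.mem_erase.mpr ⟨hx.2, Finset.mem_erase.mpr ⟨hx.1, hxs⟩⟩
        obtain ⟨D, ⟨hD, hxD⟩, hDu⟩ := h3 x hxt
        refine ⟨D, ⟨Finset.mem_insert_of_mem hD, hxD⟩, ?_⟩
        rintro C ⟨hC, hxC⟩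
        rcases Finset.mem_insert.mp hC with rfl | hC'
        · exfalso
          rcases Finset.mem_insert.mp hxC with rfl | h
          · exact hx.1 rfl
          · exact hx.2 (Finset.mem_singleton.mp h)
        · exact hDu C ⟨hC', hxC⟩

lemma pair_not_mem_matchings {a : α} {t : Finset α} (hat : a ∉ t) {b : α}
    {M : Finset (Finset α)} (hM : M ∈ matchings t) : ({a, b} : Finset α) ∉ M := by
  intro hmem
  exact hat ((mem_matchings.mp hM).1 _ hmem (by simp))

lemma card_matchings : ∀ (n : ℕ) (s : Finset α), s.card = 2*n →
    (matchings s).card = (2*n-1)‼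
  | 0, s, hs => by
    have : s = ∅ := Finset.card_eq_zero.mp (by omega)
    rw [this, matchings_empty]
    rfl
  | (n+1), s, hs => by
    have hne : s.Nonempty := Finset.card_pos.mp (by omega)
    obtain ⟨a, ha⟩ := hne
    have hanot : ∀ b, a ∉ (s.erase a).erase b :=
      fun b h => (Finset.mem_erase.mp (Finset.mem_erase.mp h).2).1 rfl
    rw [matchings_decomp s a ha, Finset.card_biUnion ?hdisj]
    case hdisj =>
      intro b hb b' hb' hne
      rw [Function.onFun, Finset.disjoint_left]
      rintro M hM hM'
      obtain ⟨M1, hM1, rfl⟩ := Finset.mem_image.mp hM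
      obtain ⟨M2, hM2, hEq⟩ := Finset.mem_image.mp hM'
      have hmem : ({a, b'} : Finset α) ∈ insert ({a, b} : Finset α) M1 := by
        rw [← hEq]; exact Finset.mem_insert_self _ _
      rcases Finset.mem_insert.mp hmem with h | h
      · have : b' ∈ ({a, b} : Finset α) := by rw [← h]; simp
        rcases Finset.mem_insert.mp this with rfl | h2
        · exact (Finset.mem_erase.mp hb').1 rfl
        · exact hne ((Finset.mem_singleton.mp h2) ▸ rfl) |>.elim
      · exact pair_not_mem_matchings (hanot b) hM1 h
    have hcardim : ∀ b ∈ s.erase a,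
        ((matchings ((s.erase a).erase b)).image (insert ({a, b} : Finset α))).card
          = (2*n-1)‼ := by
      intro b hb
      rw [Finset.card_image_of_injOn, card_matchings n ((s.erase a).erase b) ?hc]
      case hc =>
        rw [Finset.card_erase_of_mem hb, Finset.card_erase_of_mem ha]
        omega
      · intro M1 hM1 M2 hM2 hEq
        have h1 : ({a, b} : Finset α) ∉ M1 := pair_not_mem_matchings (hanot b) (by simpa using hM1)
        have h2 : ({a, b} : Finset α) ∉ M2 := pair_not_mem_matchings (hanot b) (by simpa using hM2)
        rw [← Finset.erase_insert h1, ← Finset.erase_insert h2, hEq]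
    rw [Finset.sum_congr rfl hcardim, Finset.sum_const, Finset.card_erase_of_mem ha, hs]
    have : 2*(n+1) - 1 = 2*n + 1 := by omega
    rw [this, smul_eq_mul, Nat.doubleFactorial_add_one]

lemma nat_card_pm (n : ℕ) :
    Nat.card {M : Finset (Finset (Fin (2*n))) // IsPerfectMatching M} = (2*n-1)‼ := by
  classical
  rw [Nat.card_eq_fintype_card, Fintype.card_subtype]
  have hset : (Finset.univ.filter IsPerfectMatching)
      = matchings (Finset.univ : Finset (Fin (2*n))) := by
    ext M
    simp only [Finset.mem_filter, Finset.mem_univ, true_and, mem_matchings, IsPerfectMatching]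
    constructor
    · rintro ⟨h1, h2⟩
      exact ⟨fun B _ => Finset.subset_univ B, h1, fun x _ => h2 x⟩
    · rintro ⟨_, h1, h2⟩
      exact ⟨h1, fun x => h2 x trivial⟩
  rw [hset, card_matchings n _ (by simp)]

/-- term of the sum, indexed by `j` where `m = k - 2j`. -/
def Tt (k j : ℕ) : ℕ := (k.choose (2*j) * (2*j-1)‼)^2 * (k-2*j)!

/-- telescoping certificate -/
def gg (k : ℕ) : ℕ → ℕ
  | 0 => 0
  | (j+1) => (k - 2*j) * Tt k j

lemma fact_df : ∀ j : ℕ, (2*j)! = 2^j * j ! * (2*j-1)‼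
  | 0 => rfl
  | (j+1) => by
    have h1 : 2*(j+1) = 2*j + 1 + 1 := by ring
    have h2 : 2*(j+1) - 1 = 2*j + 1 := by omega
    rw [h2, h1, Nat.factorial_succ, Nat.factorial_succ, Nat.doubleFactorial_add_one,
      fact_df j, Nat.factorial_succ, pow_succ]
    ring

lemma key {k j : ℕ} (h : 2*j ≤ k) :
    Tt k j * ((k-2*j)! * (4^j * (j !)^2)) = (k !)^2 := by
  have h4 : (4:ℕ)^j = (2^j)^2 := by
    rw [← pow_mul, pow_mul']; norm_num
  have hc : k.choose (2*j) * (2*j)! * (k-2*j)! = k ! :=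
    Nat.choose_mul_factorial_mul_factorial h
  calc Tt k j * ((k-2*j)! * (4^j * (j !)^2))
      = (k.choose (2*j) * (2^j * j ! * (2*j-1)‼))^2 * ((k-2*j)!)^2 := by
        rw [Tt, h4]; ring
    _ = (k.choose (2*j) * (2*j)! * (k-2*j)!)^2 := by rw [← fact_df]; ring
    _ = (k !)^2 := by rw [hc]

lemma step (k j : ℕ) : (2*k+1) * Tt k j + gg k j = Tt (k+1) j + gg k (j+1) := by
  cases j with
  | zero =>
    simp only [Tt, gg, Nat.mul_zero, Nat.choose_zero_right, Nat.zero_sub, Nat.sub_zero,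
      Nat.doubleFactorial, Nat.factorial_succ]
    ring
  | succ j =>
    rcases lt_or_ge k (2*(j+1)) with h | h
    · rcases eq_or_lt_of_le (Nat.lt_iff_add_one_le.mp h) with he | hlt
      · -- k = 2j+1
        have hk : k = 2*j+1 := by omega
        subst hk
        have c1 : (2*j+1).choose (2*(j+1)) = 0 := Nat.choose_eq_zero_of_lt (by omega)
        have c2 : (2*j+1+1).choose (2*(j+1)) = 1 := by
          have : 2*(j+1) = 2*j+1+1 := by ring
          rw [this, Nat.choose_self]
        have c3 : (2*j+1).choose (2*j) = 2*j+1 := by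
          have h1 : (2*j+1) - (2*j) = 1 := by omega
          rw [← Nat.choose_symm (by omega), h1, Nat.choose_one_right]
        simp only [Tt, gg, c1, c2, c3]
        have e1 : 2*j+1 - 2*(j+1) = 0 := by omega
        have e2 : 2*j+1 - 2*j = 1 := by omega
        have e3 : 2*j+1+1 - 2*(j+1) = 0 := by omega
        have e4 : 2*(j+1) - 1 = 2*j + 1 := by omega
        rw [e1, e2, e3, e4, Nat.doubleFactorial_add_one]
        simp [Nat.factorial]
      · -- k ≤ 2j : everything is zero
        have c1 : k.choose (2*(j+1)) = 0 := Nat.choose_eq_zero_of_lt (by omega)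
        have c2 : (k+1).choose (2*(j+1)) = 0 := Nat.choose_eq_zero_of_lt (by omega)
        have c3 : k - 2*j = 0 := by omega
        simp [Tt, gg, c1, c2, c3]
    · -- main case : 2*(j+1) ≤ k
      obtain ⟨d, rfl⟩ : ∃ d, k = d + 2*j + 2 := ⟨k - 2*j - 2, by omega⟩
      have e1 : d+2*j+2-2*(j+1) = d := by omega
      have e2 : d+2*j+2-2*j = d+2 := by omega
      have e3 : d+2*j+2+1-2*(j+1) = d+1 := by omega
      have h1 := key (k := d+2*j+2) (j := j+1) (by omega)
      have h2 := key (k := d+2*j+2) (j := j) (by omega)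
      have h3 := key (k := d+2*j+2+1) (j := j+1) (by omega)
      rw [e1] at h1
      rw [e2] at h2
      rw [e3] at h3
      simp only [gg, e1, e2]
      have hT1 : (Tt (d+2*j+2) (j+1) : ℚ) = ((d+2*j+2)! : ℚ)^2 / ((d ! : ℚ) * ((4:ℚ)^(j+1) * ((j+1)! : ℚ)^2)) := by
        rw [eq_div_iff (by positivity)]
        exact_mod_cast h1
      have hT2 : (Tt (d+2*j+2) j : ℚ) = ((d+2*j+2)! : ℚ)^2 / (((d+2)! : ℚ) * ((4:ℚ)^j * ((j)! : ℚ)^2)) := by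
        rw [eq_div_iff (by positivity)]
        exact_mod_cast h2
      have hT3 : (Tt (d+2*j+2+1) (j+1) : ℚ) = ((d+2*j+2+1)! : ℚ)^2 / (((d+1)! : ℚ) * ((4:ℚ)^(j+1) * ((j+1)! : ℚ)^2)) := by
        rw [eq_div_iff (by positivity)]
        exact_mod_cast h3
      apply @Nat.cast_injective ℚ
      push_cast
      rw [hT1, hT2, hT3]
      have f1 : ((d+2*j+2+1)! : ℚ) = (d+2*j+2+1) * (d+2*j+2)! := by
        exact_mod_cast Nat.factorial_succ (d+2*j+2)
      have f2 : ((d+2)! : ℚ) = (d+2) * ((d+1) * (d !)) := by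
        have : (d+2)! = (d+2) * ((d+1) * (d !)) := by
          rw [show d+2 = d+1+1 by omega, Nat.factorial_succ, Nat.factorial_succ]
        exact_mod_cast this
      have f3 : ((d+1)! : ℚ) = (d+1) * (d !) := by exact_mod_cast Nat.factorial_succ d
      have f4 : ((j+1)! : ℚ) = (j+1) * (j !) := by exact_mod_cast Nat.factorial_succ j
      have f5 : (4:ℚ)^(j+1) = 4 * 4^j := by ring
      rw [f1, f2, f3, f4, f5]
      have p1 : (0:ℚ) < (d ! : ℚ) := by exact_mod_cast Nat.factorial_pos d
      have p2 : (0:ℚ) < (j ! : ℚ) := by exact_mod_cast Nat.factorial_pos j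
      have p3 : (0:ℚ) < (4:ℚ)^j := by positivity
      field_simp
      ring

lemma sum_step (k : ℕ) : ∀ N : ℕ,
    (2*k+1) * ∑ j ∈ Finset.range N, Tt k j = (∑ j ∈ Finset.range N, Tt (k+1) j) + gg k N
  | 0 => by simp [gg]
  | (N+1) => by
    rw [Finset.sum_range_succ, Finset.sum_range_succ, Nat.mul_add, sum_step k N]
    have := step k N
    omega

def SS (k : ℕ) : ℕ := ∑ j ∈ Finset.range (k+2), Tt k j

lemma SS_succ (k : ℕ) : SS (k+1) = (2*k+1) * SS k := by
  rw [SS, SS, sum_step k (k+2)]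
  have hg : gg k (k+2) = 0 := by
    show (k - 2*(k+1)) * Tt k (k+1) = 0
    have : k - 2*(k+1) = 0 := by omega
    rw [this, Nat.zero_mul]
  have hT : Tt (k+1) (k+2) = 0 := by
    rw [Tt, Nat.choose_eq_zero_of_lt (by omega)]
    ring
  rw [hg, Finset.sum_range_succ, hT]

lemma SS_eq : ∀ k, SS k = (2*k-1)‼
  | 0 => by decide
  | (k+1) => by
    rw [SS_succ, SS_eq k]
    rw [show 2*(k+1)-1 = 2*k+1 by omega, Nat.doubleFactorial_add_one]

lemma sum_reindex (k : ℕ) :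
    ∑ m' ∈ (Finset.range (k+1)).filter (fun m' => m' % 2 = k % 2),
      (k.choose m' * (k-m'-1)‼)^2 * m' ! = SS k := by
  rw [SS]
  have hrestrict : ∑ j ∈ Finset.range (k+2), Tt k j
      = ∑ j ∈ (Finset.range (k+2)).filter (fun j => 2*j ≤ k), Tt k j := by
    refine (Finset.sum_subset (Finset.filter_subset _ _) ?_).symm
    intro x hx hnx
    simp only [Finset.mem_filter, Finset.mem_range, not_and, not_le] at hx hnx
    rw [Tt, Nat.choose_eq_zero_of_lt (by omega)]
    ring
  rw [hrestrict]
  refine Finset.sum_nbij' (fun m' => (k - m')/2) (fun j => k - 2*j) ?_ ?_ ?_ ?_ ?_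
  · intro m' hm'
    simp only [Finset.mem_filter, Finset.mem_range] at hm' ⊢
    omega
  · intro j hj
    simp only [Finset.mem_filter, Finset.mem_range] at hj ⊢
    omega
  · intro m' hm'
    simp only [Finset.mem_filter, Finset.mem_range] at hm'
    omega
  · intro j hj
    simp only [Finset.mem_filter, Finset.mem_range] at hj
    omega
  · intro m' hm'
    simp only [Finset.mem_filter, Finset.mem_range] at hm'
    simp only [Tt]
    have e1 : 2 * ((k - m')/2) = k - m' := by omega
    rw [e1, Nat.choose_symm (by omega), show k - (k - m') = m' by omega]

end AuxProof

/-- For `m ≤ k` with `k - m` even, the number of perfect matchings of a set of size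
`k - m` is `(k-m-1)‼`, and `∑_{m ≡ k (2)} (C(k,m)⬝(k-m-1)‼)² ⬝ m! = (2k-1)‼`. -/
theorem brauer_matchings_and_dimension (k m : ℕ) (hm : m ≤ k) (hpar : (k - m) % 2 = 0) :
    Nat.card {M : Finset (Finset (Fin (k - m))) // IsPerfectMatching M} =
      Nat.doubleFactorial (k - m - 1) ∧
    ∑ m' ∈ (Finset.range (k + 1)).filter (fun m' => m' % 2 = k % 2),
        (k.choose m' * Nat.doubleFactorial (k - m' - 1)) ^ 2 * m'.factorial =
      Nat.doubleFactorial (2 * k - 1) := by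
  constructor
  · obtain ⟨n, hn⟩ : ∃ n, k - m = 2*n := ⟨(k-m)/2, by omega⟩
    rw [hn]
    exact nat_card_pm n
  · rw [sum_reindex, SS_eq]
end

section
/- For natural numbers k and m ≤ k with k − m even, define b(k,m) = C(k, (k−m)/2) − C(k, (k−m)/2 − 1) (with C(k, −1) = 0). Then ∑_{m ≡ k (mod 2), 0 ≤ m ≤ k} b(k,m)^2 = Catalan(k), the k-th Catalan number. -/
open Finset

/-- `b(k,m) = C(k,(k-m)/2) - C(k,(k-m)/2 - 1)`, with the convention `C(k,-1) = 0`. -/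
def ballotCount (k m : ℕ) : ℕ :=
  k.choose ((k - m) / 2) - (if (k - m) / 2 = 0 then 0 else k.choose ((k - m) / 2 - 1))

private theorem vand1 (k : ℕ) :
    ∑ j ∈ Finset.range (k+1), (k.choose j)^2 = (2*k).choose k := by
  rw [two_mul, Nat.add_choose_eq, Finset.Nat.sum_antidiagonal_eq_sum_range_succ_mk]
  refine Finset.sum_congr rfl fun i hi => ?_
  rw [Finset.mem_range] at hi
  rw [Nat.choose_symm (by omega), sq]

private theorem vand2 (k : ℕ) (hk : 1 ≤ k) :
    ∑ j ∈ Finset.range k, k.choose j * k.choose (j+1) = (2*k).choose (k-1) := by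
  rw [two_mul, Nat.add_choose_eq, Finset.Nat.sum_antidiagonal_eq_sum_range_succ_mk]
  have h : (k-1).succ = k := by omega
  rw [h]
  refine Finset.sum_congr rfl fun i hi => ?_
  rw [Finset.mem_range] at hi
  congr 1
  exact Nat.choose_symm_of_eq_add (by omega)

/-- The integer-valued square term. -/
private def tt (k j : ℕ) : ℤ :=
  ((k.choose j : ℤ) - (if j = 0 then 0 else (k.choose (j-1) : ℤ)))^2

private theorem tt_symm (k : ℕ) {j : ℕ} (h1 : 1 ≤ j) (h2 : j ≤ k + 1) :
    tt k (k + 1 - j) = tt k j := by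
  unfold tt
  rcases Nat.lt_or_ge j (k+1) with hj | hj
  · have hjk : j ≤ k := by omega
    rw [if_neg (by omega), if_neg (by omega)]
    have e2 : k + 1 - j - 1 = k - j := by omega
    have e1 : k + 1 - j = k - (j - 1) := by omega
    rw [e2, e1, Nat.choose_symm (show j - 1 ≤ k by omega), Nat.choose_symm hjk]
    ring
  · have hj1 : j = k + 1 := by omega
    subst hj1
    have e : k + 1 - (k + 1) = 0 := by omega
    rw [e, if_pos rfl, if_neg (by omega)]
    have e2 : k + 1 - 1 = k := by omega
    rw [e2, Nat.choose_self, Nat.choose_succ_self, Nat.choose_zero_right]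
    norm_num

/-- Full sum over `range (k+2)` equals twice the half-range sum. -/
private theorem fold (k : ℕ) :
    ∑ j ∈ Finset.range (k+2), tt k j = 2 * ∑ j ∈ Finset.range (k/2 + 1), tt k j := by
  set n := k / 2 with hn
  have hsplit : Finset.range (k+2) = Finset.range (n+1) ∪ Finset.Ico (n+1) (k+2) := by
    rw [Finset.range_eq_Ico, Finset.range_eq_Ico, Finset.Ico_union_Ico_eq_Ico (by omega) (by omega)]
  have hdisj : Disjoint (Finset.range (n+1)) (Finset.Ico (n+1) (k+2)) := by
    rw [Finset.range_eq_Ico]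
    exact Finset.Ico_disjoint_Ico_consecutive 0 (n+1) (k+2)
  rw [hsplit, Finset.sum_union hdisj]
  have hrefl : ∑ j ∈ Finset.Ico (n+1) (k+2), tt k j
      = ∑ j ∈ Finset.Ico (k + 2 - (k+2)) (k + 2 - (n+1)), tt k j := by
    rw [← Finset.sum_Ico_reflect (tt k) (n+1) (le_refl (k+2))]
    refine Finset.sum_congr rfl fun j hj => ?_
    rw [Finset.mem_Ico] at hj
    exact (tt_symm k (by omega) (by omega)).symm
  rw [hrefl]
  have e1 : k + 2 - (k + 2) = 0 := by omega
  rw [e1, ← Finset.range_eq_Ico]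
  rcases Nat.even_or_odd k with ⟨m, hm⟩ | ⟨m, hm⟩
  · have e : k + 2 - (n + 1) = n + 1 := by omega
    rw [e]; ring
  · have hnm : n = m := by omega
    have e : k + 2 - (n + 1) = n + 2 := by omega
    have hmid : tt k (n+1) = 0 := by
      unfold tt
      rw [if_neg (by omega)]
      have e' : n + 1 - 1 = n := by omega
      rw [e']
      have : k.choose (n+1) = k.choose n := by
        subst hm; rw [hnm]
        exact Nat.choose_symm_half m
      rw [this]; ring
    rw [e, Finset.sum_range_succ (tt k) (n+1), hmid, add_zero]
    ring

/-- The full sum evaluated via Vandermonde. -/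
private theorem full_sum (k : ℕ) (hk : 1 ≤ k) :
    ∑ j ∈ Finset.range (k+2), tt k j
      = 2 * ((2*k).choose k : ℤ) - 2 * ((2*k).choose (k-1) : ℤ) := by
  have expand : ∀ j, tt k j = (k.choose j : ℤ)^2
      + (if j = 0 then 0 else (k.choose (j-1) : ℤ))^2
      - 2 * ((k.choose j : ℤ) * (if j = 0 then 0 else (k.choose (j-1) : ℤ))) := by
    intro j; unfold tt; ring
  simp only [expand]
  rw [Finset.sum_sub_distrib, Finset.sum_add_distrib, ← Finset.mul_sum]
  have h1 : ∑ j ∈ Finset.range (k+2), (k.choose j : ℤ)^2 = ((2*k).choose k : ℤ) := by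
    rw [Finset.sum_range_succ, Nat.choose_succ_self]
    push_cast
    rw [← vand1 k]
    push_cast
    ring
  have h2 : ∑ j ∈ Finset.range (k+2), (if j = 0 then 0 else (k.choose (j-1) : ℤ))^2
      = ((2*k).choose k : ℤ) := by
    rw [Finset.sum_range_succ']
    have hz : (if (0:ℕ) = 0 then (0:ℤ) else (k.choose (0-1) : ℤ))^2 = 0 := by simp
    rw [hz, add_zero]
    have hc : ∀ i ∈ Finset.range (k+1),
        (if i + 1 = 0 then (0:ℤ) else (k.choose (i+1-1) : ℤ))^2
          = (fun i => ((k.choose i)^2 : ℕ) : ℕ → ℤ) i := by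
      intro i _
      rw [if_neg (Nat.succ_ne_zero i), Nat.add_sub_cancel]
      push_cast; ring
    rw [Finset.sum_congr rfl hc, ← Nat.cast_sum, vand1 k]
  have h3 : ∑ j ∈ Finset.range (k+2),
      (k.choose j : ℤ) * (if j = 0 then 0 else (k.choose (j-1) : ℤ))
      = ((2*k).choose (k-1) : ℤ) := by
    rw [Finset.sum_range_succ']
    have hz : (k.choose 0 : ℤ) * (if (0:ℕ) = 0 then (0:ℤ) else (k.choose (0-1) : ℤ)) = 0 := by
      simp
    rw [hz, add_zero]
    have hc : ∀ i ∈ Finset.range (k+1),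
        (k.choose (i+1) : ℤ) * (if i + 1 = 0 then (0:ℤ) else (k.choose (i+1-1) : ℤ))
          = (fun i => ((k.choose i * k.choose (i+1)) : ℕ) : ℕ → ℤ) i := by
      intro i _
      rw [if_neg (Nat.succ_ne_zero i), Nat.add_sub_cancel]
      push_cast; ring
    rw [Finset.sum_congr rfl hc, Finset.sum_range_succ]
    simp only [Nat.choose_succ_self, Nat.mul_zero, Nat.cast_zero]
    rw [add_zero, ← Nat.cast_sum, vand2 k hk]
  rw [h1, h2, h3]; ring

/-- `∑_{0 ≤ m ≤ k, m ≡ k (2)} b(k,m)² = Catalan(k)`. -/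
theorem sum_sq_ballot_eq_catalan (k : ℕ) :
    ∑ m ∈ (Finset.range (k + 1)).filter (fun m => m % 2 = k % 2),
      (ballotCount k m) ^ 2 = catalan k := by
  rcases Nat.eq_zero_or_pos k with rfl | hk
  · rw [show (Finset.range (0+1)).filter (fun m => m % 2 = 0 % 2) = {0} by decide]
    simp [ballotCount]
  set n := k / 2 with hn
  have himg : (Finset.range (k + 1)).filter (fun m => m % 2 = k % 2)
      = (Finset.range (n+1)).image (fun j => k - 2*j) := by
    ext m
    simp only [Finset.mem_filter, Finset.mem_range, Finset.mem_image]
    constructor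
    · rintro ⟨h1, h2⟩
      exact ⟨(k - m)/2, by omega, by omega⟩
    · rintro ⟨j, hj, rfl⟩
      omega
  have hinj : ∀ x ∈ Finset.range (n+1), ∀ y ∈ Finset.range (n+1),
      k - 2*x = k - 2*y → x = y := by
    intro x hx y hy hxy
    rw [Finset.mem_range] at hx hy
    omega
  rw [himg, Finset.sum_image hinj]
  have hterm : ∀ j ∈ Finset.range (n+1),
      ballotCount k (k - 2*j) ^ 2
        = (k.choose j - (if j = 0 then 0 else k.choose (j-1))) ^ 2 := by
    intro j hj
    rw [Finset.mem_range] at hj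
    unfold ballotCount
    have e : (k - (k - 2*j))/2 = j := by omega
    rw [e]
  rw [Finset.sum_congr rfl hterm]
  have hle : ∀ j, j ≤ n → (if j = 0 then 0 else k.choose (j-1)) ≤ k.choose j := by
    intro j hj
    rcases Nat.eq_zero_or_pos j with rfl | hj1
    · simp
    · rw [if_neg (by omega)]
      have e : j - 1 + 1 = j := by omega
      calc k.choose (j-1) ≤ k.choose (j-1+1) :=
            Nat.choose_le_succ_of_lt_half_left (by omega)
        _ = k.choose j := by rw [e]
  have hcast : ((∑ j ∈ Finset.range (n+1),
      (k.choose j - (if j = 0 then 0 else k.choose (j-1))) ^ 2 : ℕ) : ℤ)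
      = ∑ j ∈ Finset.range (n+1), tt k j := by
    rw [Nat.cast_sum]
    refine Finset.sum_congr rfl fun j hj => ?_
    rw [Finset.mem_range] at hj
    have hb := hle j (by omega)
    unfold tt
    rw [Nat.cast_pow, Nat.cast_sub hb]
    congr 2
    split <;> simp
  have key : 2 * ((∑ j ∈ Finset.range (n+1),
      (k.choose j - (if j = 0 then 0 else k.choose (j-1))) ^ 2 : ℕ) : ℤ)
      = 2 * (((2*k).choose k : ℤ) - ((2*k).choose (k-1) : ℤ)) := by
    rw [hcast, ← fold k, full_sum k hk]; ring
  have hSN : ((∑ j ∈ Finset.range (n+1),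
      (k.choose j - (if j = 0 then 0 else k.choose (j-1))) ^ 2 : ℕ) : ℤ)
      = ((2*k).choose k : ℤ) - ((2*k).choose (k-1) : ℤ) := by linarith
  have hcb : (k+1) * catalan k = (2*k).choose k := by
    rw [succ_mul_catalan_eq_centralBinom, Nat.centralBinom_eq_two_mul_choose]
  have hid : (2*k).choose k * k = (2*k).choose (k-1) * (k+1) := by
    have h := Nat.choose_succ_right_eq (2*k) (k-1)
    have e1 : k - 1 + 1 = k := by omega
    have e2 : 2*k - (k-1) = k + 1 := by omega
    rwa [e1, e2] at h
  have hcat : ((k:ℤ)+1) * (catalan k : ℤ) = ((2*k).choose k : ℤ) := by exact_mod_cast hcb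
  have hid' : ((2*k).choose k : ℤ) * k = ((2*k).choose (k-1) : ℤ) * ((k:ℤ)+1) := by
    exact_mod_cast hid
  have hmul : ((k:ℤ)+1) * (catalan k : ℤ)
      = ((k:ℤ)+1) * (((2*k).choose k : ℤ) - ((2*k).choose (k-1) : ℤ)) := by
    linear_combination hcat - hid'
  have hfin : (catalan k : ℤ)
      = ((2*k).choose k : ℤ) - ((2*k).choose (k-1) : ℤ) :=
    mul_left_cancel₀ (by positivity) hmul
  exact_mod_cast hSN.trans hfin.symm
end

section
/- For the rook-Brauer algebra: the number of symmetric m-diagrams is ∑_t C(k,m)·C(k−m,2t)·(2t−1)!!, i.e., choose m of the k points to be propagating singletons, then choose 2t of the remaining k−m points and pair them up in (2t−1)!! ways, leaving the rest as singletons. Moreover ∑_{m=0}^k (∑_t C(k,m)C(k−m,2t)(2t−1)!!)^2 · m! equals the number of set partitions of a 2k-element set all of whose blocks have size 1 or 2 (the dimension of RB_k(n)). -/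
open Finset
set_option linter.unusedSectionVars false

/-- `P` is a set partition of `Fin n`. -/
def IsSetPartition {n : ℕ} (P : Finset (Finset (Fin n))) : Prop :=
  (∀ B ∈ P, B.Nonempty) ∧ ∀ x : Fin n, ∃! B, B ∈ P ∧ x ∈ B

namespace RB

def tel : ℕ → ℕ
  | 0 => 1
  | 1 => 1
  | (n+2) => tel (n+1) + (n+1) * tel n

lemma tel_succ (n : ℕ) : tel (n+1) = tel n + n * tel (n-1) := by
  cases n with
  | zero => simp [tel]
  | succ n => rfl

lemma choose_mul_aux (b m : ℕ) : (m+1) * b.choose (m+1) = b * (b-1).choose m := by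
  cases b with
  | zero => simp
  | succ b => simpa [mul_comm] using (Nat.add_one_mul_choose_eq b m).symm

lemma choose_mul_aux2 (a m : ℕ) : (a - m) * a.choose m = a * (a-1).choose m := by
  calc (a - m) * a.choose m = a.choose (m+1) * (m+1) := by
        rw [Nat.choose_succ_right_eq, mul_comm]
    _ = a * (a-1).choose m := by rw [mul_comm, choose_mul_aux]

lemma dfac_succ (t : ℕ) : Nat.doubleFactorial (2*t+1) = (2*t+1) * Nat.doubleFactorial (2*t-1) := by
  cases t with
  | zero => simp [Nat.doubleFactorial]
  | succ t =>
    have h : 2*(t+1)+1 = (2*t+1)+2 := by ring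
    have h2 : 2*(t+1)-1 = 2*t+1 := by omega
    rw [h, h2, Nat.doubleFactorial]

end RB

namespace RB

def R (n : ℕ) : ℕ := ∑ t ∈ Finset.range (n+1), n.choose (2*t) * Nat.doubleFactorial (2*t-1)

lemma R_rec (n : ℕ) : R (n+2) = R (n+1) + (n+1) * R n := by
  have peel : ∀ m : ℕ, R (m+1) = 1 + ∑ t ∈ Finset.range (m+1),
      (m+1).choose (2*t+2) * Nat.doubleFactorial (2*t+1) := by
    intro m
    rw [R, Finset.sum_range_succ']
    have : ∀ t, (m+1).choose (2*(t+1)) * Nat.doubleFactorial (2*(t+1)-1)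
        = (m+1).choose (2*t+2) * Nat.doubleFactorial (2*t+1) := by
      intro t
      have h1 : 2*(t+1) = 2*t+2 := by ring
      have h2 : 2*(t+1)-1 = 2*t+1 := by omega
      rw [h2, h1]
    rw [Finset.sum_congr rfl (fun t _ => this t)]
    simp [add_comm]
  have hsplit : ∀ t : ℕ, (n+2).choose (2*t+2) * Nat.doubleFactorial (2*t+1)
      = (n+1).choose (2*t+2) * Nat.doubleFactorial (2*t+1)
        + (n+1) * ((n).choose (2*t) * Nat.doubleFactorial (2*t-1)) := by
    intro t
    have h1 : (n+2).choose (2*t+2) = (n+1).choose (2*t+1) + (n+1).choose (2*t+2) :=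
      Nat.choose_succ_succ (n+1) (2*t+1)
    rw [h1, add_mul, add_comm]
    congr 1
    rw [dfac_succ, ← mul_assoc, mul_comm ((n+1).choose (2*t+1)) (2*t+1), choose_mul_aux,
      show n+1-1 = n from rfl, mul_assoc]
  rw [peel (n+1), Finset.sum_congr rfl (fun t _ => hsplit t), Finset.sum_add_distrib,
    ← Finset.mul_sum]
  set S1 := ∑ t ∈ Finset.range (n+2), (n+1).choose (2*t+2) * Nat.doubleFactorial (2*t+1) with hS1
  set S2 := ∑ t ∈ Finset.range (n+2), n.choose (2*t) * Nat.doubleFactorial (2*t-1) with hS2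
  have e1 : S1 + 1 = R (n+1) := by
    rw [hS1, Finset.sum_range_succ,
      Nat.choose_eq_zero_of_lt (show n+1 < 2*(n+1)+2 by omega), peel n]
    omega
  have e2 : S2 = R n := by
    rw [hS2, Finset.sum_range_succ,
      Nat.choose_eq_zero_of_lt (show n < 2*(n+1) by omega)]
    simp [R]
  rw [e2, ← e1]
  ring

lemma R_eq_tel (n : ℕ) : R n = tel n := by
  induction n using Nat.strong_induction_on with
  | _ n ih =>
    match n with
    | 0 => simp [R, tel]
    | 1 => simp [R, tel, Finset.sum_range_succ, Nat.doubleFactorial]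
    | (n+2) => rw [R_rec, ih (n+1) (by omega), ih n (by omega)]; rfl

end RB

namespace RB

def G (a b : ℕ) : ℕ :=
  ∑ m ∈ Finset.range (a+1), a.choose m * b.choose m * m.factorial * tel (a-m) * tel (b-m)

lemma G_zero (b : ℕ) : G 0 b = tel b := by simp [G, tel]

lemma G_rec (a b : ℕ) : G (a+1) b = G a b + a * G (a-1) b + b * G a (b-1) := by
  set f : ℕ → ℕ := fun m => (a+1).choose m * b.choose m * m.factorial * tel (a+1-m) * tel (b-m)
    with hf
  set g : ℕ → ℕ := fun m =>
    a.choose (m+1) * b.choose (m+1) * (m+1).factorial * tel (a-m) * tel (b-(m+1)) with hg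
  set h : ℕ → ℕ := fun m =>
    a.choose m * (b-1).choose m * m.factorial * tel (a-m) * tel ((b-1)-m) with hh
  set w : ℕ → ℕ := fun m =>
    a.choose m * b.choose m * m.factorial * tel (a-m) * tel (b-m) with hw
  set v : ℕ → ℕ := fun m =>
    (a-1).choose m * b.choose m * m.factorial * tel (a-1-m) * tel (b-m) with hv
  set z : ℕ → ℕ := fun m =>
    a.choose m * b.choose m * m.factorial * tel (a+1-m) * tel (b-m) with hz
  have hY : ∀ m : ℕ, a.choose m * b.choose (m+1) * (m+1).factorial * tel (a-m) * tel (b-(m+1))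
      = b * h m := by
    intro m
    have h1 : b - (m+1) = b-1-m := by omega
    have h2 : (m+1).factorial = (m+1) * m.factorial := rfl
    have h3 : b.choose (m+1) * ((m+1) * m.factorial) = (b * (b-1).choose m) * m.factorial := by
      rw [← mul_assoc, mul_comm (b.choose (m+1)) (m+1), choose_mul_aux]
    rw [h1, h2, hh]
    calc a.choose m * b.choose (m+1) * ((m+1) * m.factorial) * tel (a-m) * tel (b-1-m)
        = a.choose m * (b.choose (m+1) * ((m+1) * m.factorial)) * tel (a-m) * tel (b-1-m) := by
          ring
      _ = a.choose m * ((b * (b-1).choose m) * m.factorial) * tel (a-m) * tel (b-1-m) := by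
          rw [h3]
      _ = b * (a.choose m * (b-1).choose m * m.factorial * tel (a-m) * tel (b-1-m)) := by ring
  have hT : ∀ m : ℕ, tel (a+1-m) = tel (a-m) + (a-m) * tel (a-m-1) := by
    intro m
    rcases le_or_gt m a with hle | hlt
    · have : a+1-m = (a-m)+1 := by omega
      rw [this, tel_succ]
    · have h1 : a+1-m = 0 ∨ a+1-m = 1 := by omega
      have h2 : a - m = 0 := by omega
      rcases h1 with h1 | h1 <;> rw [h1, h2] <;> simp [tel]
  have step1 : ∀ m ∈ Finset.range (a+1), f (m+1) = g m + b * h m := by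
    intro m _
    rw [hf, hg]
    simp only
    rw [← hY m, Nat.choose_succ_succ a m, Nat.add_sub_add_right a 1 m]
    ring
  have hzsplit : ∀ m ∈ Finset.range (a+1), z m = w m + a * v m := by
    intro m _
    have h1 : a - m - 1 = a-1-m := by omega
    have h2 : (a-m) * a.choose m = a * (a-1).choose m := choose_mul_aux2 a m
    rw [hz, hw, hv]
    simp only
    rw [hT m]
    calc a.choose m * b.choose m * m.factorial * (tel (a-m) + (a-m) * tel (a-m-1)) * tel (b-m)
        = a.choose m * b.choose m * m.factorial * tel (a-m) * tel (b-m)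
          + ((a-m) * a.choose m) * b.choose m * m.factorial * tel (a-m-1) * tel (b-m) := by
          ring
      _ = a.choose m * b.choose m * m.factorial * tel (a-m) * tel (b-m)
          + (a * (a-1).choose m) * b.choose m * m.factorial * tel (a-1-m) * tel (b-m) := by
          rw [h1, h2]
      _ = _ := by ring
  have hvG : a * ∑ m ∈ Finset.range (a+1), v m = a * G (a-1) b := by
    cases a with
    | zero => simp
    | succ s =>
      congr 1
      rw [hv, G, Finset.sum_range_succ]
      simp only [Nat.succ_sub_one]
      rw [Nat.choose_eq_zero_of_lt (Nat.lt_succ_self s)]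
      simp
  have hZeq : ∑ m ∈ Finset.range (a+1), g m + f 0 = G a b + a * G (a-1) b := by
    have e1 : ∑ m ∈ Finset.range (a+2), z m
        = ∑ m ∈ Finset.range (a+1), z (m+1) + z 0 := Finset.sum_range_succ' z (a+1)
    have e2 : ∀ m ∈ Finset.range (a+1), z (m+1) = g m := by
      intro m _
      rw [hz, hg]
      simp only
      rw [Nat.add_sub_add_right a 1 m]
    have e3 : z 0 = f 0 := by rw [hz, hf]; simp
    have e4 : ∑ m ∈ Finset.range (a+2), z m = ∑ m ∈ Finset.range (a+1), z m + z (a+1) :=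
      Finset.sum_range_succ z (a+1)
    have e5 : z (a+1) = 0 := by
      rw [hz]; simp only
      rw [Nat.choose_eq_zero_of_lt (Nat.lt_succ_self a)]
      ring
    have e6 : ∑ m ∈ Finset.range (a+1), z m = G a b + a * ∑ m ∈ Finset.range (a+1), v m := by
      rw [Finset.sum_congr rfl hzsplit, Finset.sum_add_distrib, ← Finset.mul_sum, G]
    rw [Finset.sum_congr rfl e2, e3] at e1
    rw [← e1, e4, e5, add_zero, e6, hvG]
  calc G (a+1) b = ∑ m ∈ Finset.range (a+1), f (m+1) + f 0 := by
        rw [G, Finset.sum_range_succ' f (a+1)]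
    _ = ∑ m ∈ Finset.range (a+1), (g m + b * h m) + f 0 := by
        rw [Finset.sum_congr rfl step1]
    _ = (∑ m ∈ Finset.range (a+1), g m + f 0) + b * ∑ m ∈ Finset.range (a+1), h m := by
        rw [Finset.sum_add_distrib, ← Finset.mul_sum]
        ring
    _ = (G a b + a * G (a-1) b) + b * G a (b-1) := by
        rw [hZeq, hh, G]
        rfl
    _ = _ := by ring

lemma G_eq_tel (a : ℕ) : ∀ b : ℕ, G a b = tel (a+b) := by
  induction a using Nat.strong_induction_on with
  | _ a ih =>
    match a with
    | 0 => intro b; rw [G_zero, Nat.zero_add]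
    | (a+1) =>
      intro b
      rw [G_rec, ih a (by omega) b, ih (a-1) (by omega) b]
      have key : tel (a+1+b) = tel (a+b) + (a+b) * tel (a+b-1) := by
        have : a+1+b = (a+b)+1 := by omega
        rw [this, tel_succ]
      rw [key]
      cases b with
      | zero =>
        cases a with
        | zero => simp
        | succ s =>
          have h1 : s+1-1+0 = s+1+0-1 := by omega
          rw [h1]
          ring
      | succ t =>
        have h0 : t+1-1 = t := rfl
        rw [h0, ih a (by omega) t]
        cases a with
        | zero => simp
        | succ s =>
          have h1 : s+1-1+(t+1) = s+1+(t+1)-1 := by omega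
          have h2 : s+1+t = s+1+(t+1)-1 := by omega
          rw [h1, h2]
          ring

end RB

namespace RB

variable {α : Type*} [DecidableEq α]

def IsPM (s : Finset α) (P : Finset (Finset α)) : Prop :=
  (∀ B ∈ P, B ⊆ s) ∧ (∀ B ∈ P, B.Nonempty ∧ B.card ≤ 2) ∧ ∀ x ∈ s, ∃! B, B ∈ P ∧ x ∈ B

noncomputable def pmSet (s : Finset α) : Finset (Finset (Finset α)) :=
  @Finset.filter _ (IsPM s) (Classical.decPred _) s.powerset.powerset

lemma mem_pmSet {s : Finset α} {P : Finset (Finset α)} : P ∈ pmSet s ↔ IsPM s P := by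
  classical
  rw [pmSet, Finset.mem_filter, Finset.mem_powerset, and_iff_right_iff_imp]
  intro h B hB
  rw [Finset.mem_powerset]
  exact h.1 B hB

lemma IsPM.block_eq {s : Finset α} {P : Finset (Finset α)} (h : IsPM s P)
    {B B' : Finset α} (hB : B ∈ P) (hB' : B' ∈ P) {x : α} (hx : x ∈ B) (hx' : x ∈ B') :
    B = B' := by
  obtain ⟨C, _, huniq⟩ := h.2.2 x (h.1 B hB hx)
  rw [huniq B ⟨hB, hx⟩, huniq B' ⟨hB', hx'⟩]

lemma pmSet_empty : pmSet (∅ : Finset α) = {∅} := by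
  ext P
  rw [mem_pmSet, Finset.mem_singleton]
  constructor
  · rintro ⟨h1, h2, _⟩
    rcases Finset.eq_empty_or_nonempty P with rfl | ⟨B, hB⟩
    · rfl
    · obtain ⟨x, hx⟩ := (h2 B hB).1
      exact absurd (h1 B hB hx) (by simp)
  · rintro rfl
    exact ⟨by simp, by simp, by simp⟩

lemma isPM_insert_singleton {s : Finset α} {P : Finset (Finset α)} {a : α}
    (ha : a ∉ s) (hP : IsPM s P) : IsPM (insert a s) (insert {a} P) := by
  obtain ⟨h1, h2, h3⟩ := hP
  refine ⟨?_, ?_, ?_⟩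
  · intro B hB
    rcases Finset.mem_insert.1 hB with rfl | hB
    · simp
    · exact (h1 B hB).trans (Finset.subset_insert a s)
  · intro B hB
    rcases Finset.mem_insert.1 hB with rfl | hB
    · simp
    · exact h2 B hB
  · intro x hx
    rcases Finset.mem_insert.1 hx with rfl | hx
    · refine ⟨{x}, ⟨Finset.mem_insert_self _ _, Finset.mem_singleton_self x⟩, ?_⟩
      rintro B ⟨hB, hxB⟩
      rcases Finset.mem_insert.1 hB with rfl | hB
      · rfl
      · exact absurd (h1 B hB hxB) ha
    · obtain ⟨B, ⟨hB, hxB⟩, huniq⟩ := h3 x hx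
      refine ⟨B, ⟨Finset.mem_insert_of_mem hB, hxB⟩, ?_⟩
      rintro C ⟨hC, hxC⟩
      rcases Finset.mem_insert.1 hC with rfl | hC
      · rw [Finset.mem_singleton] at hxC
        exact absurd (hxC ▸ hx) ha
      · exact huniq C ⟨hC, hxC⟩

lemma isPM_insert_pair {s : Finset α} {P : Finset (Finset α)} {a b : α}
    (ha : a ∉ s) (hb : b ∈ s) (hP : IsPM (s.erase b) P) :
    IsPM (insert a s) (insert {a, b} P) := by
  obtain ⟨h1, h2, h3⟩ := hP
  have hab : a ≠ b := fun h => ha (h ▸ hb)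
  have hsub : s.erase b ⊆ insert a s := (Finset.erase_subset b s).trans (Finset.subset_insert a s)
  have hmem : ∀ {x : α} {B : Finset α}, B ∈ P → x ∈ B → x ∈ s.erase b :=
    fun hB hx => h1 _ hB hx
  refine ⟨?_, ?_, ?_⟩
  · intro B hB
    rcases Finset.mem_insert.1 hB with rfl | hB
    · intro x hx
      rcases Finset.mem_insert.1 hx with rfl | hx
      · exact Finset.mem_insert_self _ _
      · rw [Finset.mem_singleton] at hx
        subst hx
        exact Finset.mem_insert_of_mem hb
    · exact (h1 B hB).trans hsub
  · intro B hB
    rcases Finset.mem_insert.1 hB with rfl | hB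
    · constructor
      · exact ⟨a, Finset.mem_insert_self _ _⟩
      · exact Finset.card_insert_le _ _ |>.trans (by simp)
    · exact h2 B hB
  · intro x hx
    by_cases hxab : x = a ∨ x = b
    · refine ⟨{a, b}, ⟨Finset.mem_insert_self _ _, ?_⟩, ?_⟩
      · rcases hxab with rfl | rfl
        · exact Finset.mem_insert_self _ _
        · exact Finset.mem_insert_of_mem (Finset.mem_singleton_self _)
      · rintro C ⟨hC, hxC⟩
        rcases Finset.mem_insert.1 hC with rfl | hC
        · rfl
        · exfalso
          have := hmem hC hxC
          rcases hxab with rfl | rfl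
          · exact ha (Finset.mem_of_mem_erase this)
          · exact (Finset.notMem_erase x s) this
    · push_neg at hxab
      have hxs : x ∈ s.erase b := by
        rcases Finset.mem_insert.1 hx with rfl | hx
        · exact absurd rfl hxab.1
        · exact Finset.mem_erase.2 ⟨hxab.2, hx⟩
      obtain ⟨B, ⟨hB, hxB⟩, huniq⟩ := h3 x hxs
      refine ⟨B, ⟨Finset.mem_insert_of_mem hB, hxB⟩, ?_⟩
      rintro C ⟨hC, hxC⟩
      rcases Finset.mem_insert.1 hC with rfl | hC
      · exfalso
        rcases Finset.mem_insert.1 hxC with rfl | hxC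
        · exact hxab.1 rfl
        · exact hxab.2 (Finset.mem_singleton.1 hxC)
      · exact huniq C ⟨hC, hxC⟩

lemma isPM_extract {s : Finset α} {P : Finset (Finset α)} {a : α}
    (ha : a ∉ s) (hP : IsPM (insert a s) P) :
    ({a} ∈ P ∧ IsPM s (P.erase {a})) ∨
      ∃ b ∈ s, {a, b} ∈ P ∧ IsPM (s.erase b) (P.erase {a, b}) := by
  obtain ⟨B, ⟨hB, haB⟩, _⟩ := hP.2.2 a (Finset.mem_insert_self a s)
  have hBsub := hP.1 B hB
  have hcard := hP.2.1 B hB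
  by_cases hBa : B = {a}
  · subst hBa
    left
    refine ⟨hB, ?_, ?_, ?_⟩
    · intro C hC
      obtain ⟨hCne, hCP⟩ := Finset.mem_erase.1 hC
      intro x hx
      have hxs := hP.1 C hCP hx
      rcases Finset.mem_insert.1 hxs with rfl | hxs
      · exact absurd (hP.block_eq hCP hB hx haB) hCne
      · exact hxs
    · intro C hC
      exact hP.2.1 C (Finset.mem_erase.1 hC).2
    · intro x hx
      obtain ⟨C, ⟨hC, hxC⟩, huniq⟩ := hP.2.2 x (Finset.mem_insert_of_mem hx)
      have hCne : C ≠ {a} := by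
        rintro rfl
        rw [Finset.mem_singleton] at hxC
        exact ha (hxC ▸ hx)
      refine ⟨C, ⟨Finset.mem_erase.2 ⟨hCne, hC⟩, hxC⟩, ?_⟩
      rintro D ⟨hD, hxD⟩
      exact huniq D ⟨(Finset.mem_erase.1 hD).2, hxD⟩
  · -- B has card 2, B = {a, b}
    have hc2 : B.card = 2 := by
      rcases Nat.lt_or_ge B.card 2 with h | h
      · exfalso
        interval_cases hc : B.card
        · exact absurd (Finset.card_eq_zero.1 hc) (Finset.nonempty_iff_ne_empty.1 hcard.1)
        · obtain ⟨x, hx⟩ := Finset.card_eq_one.1 hc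
          apply hBa
          rw [hx] at haB ⊢
          rw [Finset.mem_singleton] at haB
          rw [haB]
      · exact le_antisymm hcard.2 h
    obtain ⟨b, hab, hBab⟩ : ∃ b, b ≠ a ∧ B = {a, b} := by
      have h1 : (B.erase a).card = 1 := by
        rw [Finset.card_erase_of_mem haB, hc2]
      obtain ⟨b, hb⟩ := Finset.card_eq_one.1 h1
      refine ⟨b, ?_, ?_⟩
      · have : b ∈ B.erase a := hb ▸ Finset.mem_singleton_self b
        exact (Finset.mem_erase.1 this).1
      · rw [← Finset.insert_erase haB, hb]
    subst hBab
    have hbs : b ∈ s := by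
      have := hBsub (by simp : b ∈ ({a, b} : Finset α))
      rcases Finset.mem_insert.1 this with h | h
      · exact absurd h hab
      · exact h
    right
    refine ⟨b, hbs, hB, ?_, ?_, ?_⟩
    · intro C hC
      obtain ⟨hCne, hCP⟩ := Finset.mem_erase.1 hC
      intro x hx
      have hxs := hP.1 C hCP hx
      rw [Finset.mem_erase]
      rcases Finset.mem_insert.1 hxs with rfl | hxs
      · exact absurd (hP.block_eq hCP hB hx haB) hCne
      · refine ⟨?_, hxs⟩
        rintro rfl
        exact hCne (hP.block_eq hCP hB hx (by simp))
    · intro C hC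
      exact hP.2.1 C (Finset.mem_erase.1 hC).2
    · intro x hx
      obtain ⟨hxb, hxs⟩ := Finset.mem_erase.1 hx
      obtain ⟨C, ⟨hC, hxC⟩, huniq⟩ := hP.2.2 x (Finset.mem_insert_of_mem hxs)
      have hCne : C ≠ {a, b} := by
        rintro rfl
        rcases Finset.mem_insert.1 hxC with rfl | hxC
        · exact ha hxs
        · exact hxb (Finset.mem_singleton.1 hxC)
      refine ⟨C, ⟨Finset.mem_erase.2 ⟨hCne, hC⟩, hxC⟩, ?_⟩
      rintro D ⟨hD, hxD⟩
      exact huniq D ⟨(Finset.mem_erase.1 hD).2, hxD⟩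

lemma pm_card_insert {s : Finset α} {a : α} (ha : a ∉ s) :
    (pmSet (insert a s)).card = (pmSet s).card + ∑ b ∈ s, (pmSet (s.erase b)).card := by
  classical
  have fact1 : ∀ P ∈ pmSet s, ({a} : Finset α) ∉ P := by
    intro P hP h
    exact ha ((mem_pmSet.1 hP).1 _ h (Finset.mem_singleton_self a))
  have fact2 : ∀ b, b ∈ s → ∀ Q ∈ pmSet (s.erase b), ∀ c : α, ({a, c} : Finset α) ∉ Q := by
    intro b hb Q hQ c h
    have := (mem_pmSet.1 hQ).1 _ h (Finset.mem_insert_self a {c})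
    exact ha (Finset.mem_of_mem_erase this)
  have fact3 : ∀ c ∈ s, ({a} : Finset α) ≠ {a, c} := by
    intro c hc h
    have : c ∈ ({a} : Finset α) := h ▸ Finset.mem_insert_of_mem (Finset.mem_singleton_self c)
    rw [Finset.mem_singleton] at this
    exact ha (this ▸ hc)
  have key : ((pmSet s).disjSum
      (s.sigma fun b => pmSet (s.erase b))).card
      = (pmSet (insert a s)).card := by
    apply Finset.card_bij
      (i := fun x _ => Sum.elim (fun P => insert ({a} : Finset α) P)
        (fun p => insert {a, p.1} p.2) x)
    · rintro (P | ⟨b, Q⟩) hx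
      · rw [Finset.inl_mem_disjSum] at hx
        exact mem_pmSet.2 (isPM_insert_singleton ha (mem_pmSet.1 hx))
      · rw [Finset.inr_mem_disjSum, Finset.mem_sigma] at hx
        exact mem_pmSet.2 (isPM_insert_pair ha hx.1 (mem_pmSet.1 hx.2))
    · rintro (P | ⟨b, P⟩) hx (Q | ⟨c, Q⟩) hy hxy <;> simp only [Sum.elim_inl, Sum.elim_inr] at hxy
      · rw [Finset.inl_mem_disjSum] at hx hy
        have : P = Q := by
          rw [← Finset.erase_insert (fact1 P hx), hxy, Finset.erase_insert (fact1 Q hy)]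
        rw [this]
      · rw [Finset.inl_mem_disjSum] at hx
        rw [Finset.inr_mem_disjSum, Finset.mem_sigma] at hy
        exfalso
        have hmem : ({a} : Finset α) ∈ insert ({a, c} : Finset α) Q := by
          rw [← hxy]; exact Finset.mem_insert_self _ _
        rcases Finset.mem_insert.1 hmem with h | h
        · exact fact3 c hy.1 h
        · exact ha (Finset.mem_of_mem_erase ((mem_pmSet.1 hy.2).1 _ h (Finset.mem_singleton_self a)))
      · rw [Finset.inr_mem_disjSum, Finset.mem_sigma] at hx
        rw [Finset.inl_mem_disjSum] at hy
        exfalso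
        have hmem : ({a} : Finset α) ∈ insert ({a, b} : Finset α) P := by
          rw [hxy]; exact Finset.mem_insert_self _ _
        rcases Finset.mem_insert.1 hmem with h | h
        · exact fact3 b hx.1 h
        · exact ha (Finset.mem_of_mem_erase ((mem_pmSet.1 hx.2).1 _ h (Finset.mem_singleton_self a)))
      · rw [Finset.inr_mem_disjSum, Finset.mem_sigma] at hx hy
        have hcb : c = b := by
          have hmem : ({a, c} : Finset α) ∈ insert ({a, b} : Finset α) P := by
            rw [hxy]; exact Finset.mem_insert_self _ _
          rcases Finset.mem_insert.1 hmem with h | h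
          · have : c ∈ ({a, b} : Finset α) :=
              h ▸ Finset.mem_insert_of_mem (Finset.mem_singleton_self c)
            rcases Finset.mem_insert.1 this with rfl | hcb
            · exact absurd hy.1 ha
            · exact Finset.mem_singleton.1 hcb
          · exact absurd h (fact2 b hx.1 P hx.2 c)
        subst hcb
        have : P = Q := by
          rw [← Finset.erase_insert (fact2 c hx.1 P hx.2 c), hxy,
            Finset.erase_insert (fact2 c hy.1 Q hy.2 c)]
        rw [this]
    · intro P hP
      rcases isPM_extract ha (mem_pmSet.1 hP) with ⟨hmem, hrest⟩ | ⟨b, hbs, hmem, hrest⟩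
      · refine ⟨Sum.inl (P.erase {a}), ?_, ?_⟩
        · rw [Finset.inl_mem_disjSum]
          exact mem_pmSet.2 hrest
        · simp only [Sum.elim_inl]
          exact Finset.insert_erase hmem
      · refine ⟨Sum.inr ⟨b, P.erase {a, b}⟩, ?_, ?_⟩
        · rw [Finset.inr_mem_disjSum, Finset.mem_sigma]
          exact ⟨hbs, mem_pmSet.2 hrest⟩
        · simp only [Sum.elim_inr]
          exact Finset.insert_erase hmem
  rw [← key, Finset.card_disjSum, Finset.card_sigma]

end RB

namespace RB

variable {α : Type*} [DecidableEq α]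

lemma pmSet_card (s : Finset α) : (pmSet s).card = tel s.card := by
  induction s using Finset.strongInduction with
  | _ s ih =>
    rcases Finset.eq_empty_or_nonempty s with rfl | ⟨a, has⟩
    · rw [pmSet_empty]
      simp [tel]
    · have hs : s = insert a (s.erase a) := (Finset.insert_erase has).symm
      have hanotin : a ∉ s.erase a := Finset.notMem_erase a s
      rw [hs, pm_card_insert hanotin, ih (s.erase a) (Finset.erase_ssubset has)]
      have hcard : ∀ b ∈ s.erase a, ((s.erase a).erase b).card = s.card - 2 := by
        intro b hb
        rw [Finset.card_erase_of_mem hb, Finset.card_erase_of_mem has]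
        omega
      have hsum : ∑ b ∈ s.erase a, (pmSet ((s.erase a).erase b)).card
          = (s.card - 1) * tel (s.card - 2) := by
        rw [Finset.sum_congr rfl (fun b hb => ?_), Finset.sum_const, smul_eq_mul,
          Finset.card_erase_of_mem has]
        rw [ih ((s.erase a).erase b) ((Finset.erase_ssubset hb).trans_subset (Finset.erase_subset a s))]
        rw [hcard b hb]
      rw [hsum, Finset.card_erase_of_mem has]
      obtain ⟨n, hn⟩ : ∃ n, s.card = n + 1 :=
        ⟨s.card - 1, (Nat.succ_pred_eq_of_pos (Finset.card_pos.2 ⟨a, has⟩)).symm⟩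
      rw [hn]
      simp only [Nat.add_sub_cancel]
      have : n + 1 - 2 = n - 1 := by omega
      rw [this, (Finset.card_insert_of_notMem hanotin), Finset.card_erase_of_mem has, hn]
      simp only [Nat.add_sub_cancel]
      exact (tel_succ n).symm ▸ rfl


noncomputable def pairsSet (s : Finset α) (m : ℕ) :
    Finset (Finset (Finset α) × Finset (Finset α)) :=
  @Finset.filter _
    (fun PS => IsPM s PS.1 ∧ PS.2 ⊆ PS.1 ∧ (∀ B ∈ PS.2, B.card = 1) ∧ PS.2.card = m)
    (Classical.decPred _) (s.powerset.powerset ×ˢ s.powerset.powerset)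

lemma mem_pairsSet {s : Finset α} {m : ℕ} {PS : Finset (Finset α) × Finset (Finset α)} :
    PS ∈ pairsSet s m ↔
      IsPM s PS.1 ∧ PS.2 ⊆ PS.1 ∧ (∀ B ∈ PS.2, B.card = 1) ∧ PS.2.card = m := by
  classical
  rw [pairsSet, Finset.filter_congr_decidable, Finset.mem_filter, and_iff_right_iff_imp]
  intro h
  rw [Finset.mem_product, Finset.mem_powerset, Finset.mem_powerset]
  constructor
  · intro B hB
    rw [Finset.mem_powerset]
    exact h.1.1 B hB
  · intro B hB
    rw [Finset.mem_powerset]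
    exact h.1.1 B (h.2.1 hB)

lemma isPM_union_singletons {s A : Finset α} (hA : A ⊆ s) {P : Finset (Finset α)}
    (hP : IsPM (s \ A) P) : IsPM s (P ∪ A.image fun x => {x}) := by
  obtain ⟨h1, h2, h3⟩ := hP
  refine ⟨?_, ?_, ?_⟩
  · intro B hB
    rcases Finset.mem_union.1 hB with hB | hB
    · exact (h1 B hB).trans (Finset.sdiff_subset)
    · obtain ⟨x, hx, rfl⟩ := Finset.mem_image.1 hB
      simpa using hA hx
  · intro B hB
    rcases Finset.mem_union.1 hB with hB | hB
    · exact h2 B hB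
    · obtain ⟨x, hx, rfl⟩ := Finset.mem_image.1 hB
      simp
  · intro x hx
    by_cases hxA : x ∈ A
    · refine ⟨{x}, ⟨Finset.mem_union_right _ (Finset.mem_image_of_mem _ hxA),
        Finset.mem_singleton_self x⟩, ?_⟩
      rintro C ⟨hC, hxC⟩
      rcases Finset.mem_union.1 hC with hC | hC
      · exact absurd (Finset.mem_sdiff.1 (h1 C hC hxC)).2 (fun h => h hxA)
      · obtain ⟨y, hy, rfl⟩ := Finset.mem_image.1 hC
        rw [Finset.mem_singleton] at hxC
        rw [hxC]
    · obtain ⟨B, ⟨hB, hxB⟩, huniq⟩ := h3 x (Finset.mem_sdiff.2 ⟨hx, hxA⟩)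
      refine ⟨B, ⟨Finset.mem_union_left _ hB, hxB⟩, ?_⟩
      rintro C ⟨hC, hxC⟩
      rcases Finset.mem_union.1 hC with hC | hC
      · exact huniq C ⟨hC, hxC⟩
      · obtain ⟨y, hy, rfl⟩ := Finset.mem_image.1 hC
        rw [Finset.mem_singleton] at hxC
        exact absurd (hxC ▸ hy) hxA

lemma pairsSet_card (s : Finset α) (m : ℕ) :
    (pairsSet s m).card = s.card.choose m * tel (s.card - m) := by
  classical
  have hdisj : ∀ (A : Finset α), A ⊆ s → ∀ P ∈ pmSet (s \ A),
      ∀ x ∈ A, ({x} : Finset α) ∉ P := by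
    intro A hA P hP x hx h
    have := (mem_pmSet.1 hP).1 _ h (Finset.mem_singleton_self x)
    exact (Finset.mem_sdiff.1 this).2 hx
  have key : ((s.powersetCard m).sigma fun A => pmSet (s \ A)).card = (pairsSet s m).card := by
    apply Finset.card_bij
      (i := fun p _ => ((p.2 ∪ p.1.image fun x => ({x} : Finset α)),
        p.1.image fun x => ({x} : Finset α)))
    · rintro ⟨A, P⟩ hp
      rw [Finset.mem_sigma, Finset.mem_powersetCard] at hp
      obtain ⟨⟨hAs, hAm⟩, hP⟩ := hp
      rw [mem_pairsSet]
      refine ⟨isPM_union_singletons hAs (mem_pmSet.1 hP), Finset.subset_union_right, ?_, ?_⟩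
      · intro B hB
        obtain ⟨x, hx, rfl⟩ := Finset.mem_image.1 hB
        simp
      · rw [Finset.card_image_of_injective _ (fun x y h => by
          simpa using h), hAm]
    · rintro ⟨A, P⟩ hp ⟨A', P'⟩ hp' h
      rw [Finset.mem_sigma, Finset.mem_powersetCard] at hp hp'
      simp only [Prod.mk.injEq] at h
      have hAA : A = A' := by
        apply Finset.image_injective (f := fun x => ({x} : Finset α))
          (fun x y hxy => by simpa using hxy)
        exact h.2
      subst hAA
      have hPP : P = P' := by
        have e1 : P ∩ A.image (fun x => ({x} : Finset α)) = ∅ := by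
          rw [Finset.eq_empty_iff_forall_notMem]
          intro B hB
          rw [Finset.mem_inter] at hB
          obtain ⟨x, hx, rfl⟩ := Finset.mem_image.1 hB.2
          exact hdisj A hp.1.1 P hp.2 x hx hB.1
        have e2 : P' ∩ A.image (fun x => ({x} : Finset α)) = ∅ := by
          rw [Finset.eq_empty_iff_forall_notMem]
          intro B hB
          rw [Finset.mem_inter] at hB
          obtain ⟨x, hx, rfl⟩ := Finset.mem_image.1 hB.2
          exact hdisj A hp'.1.1 P' hp'.2 x hx hB.1
        have := h.1
        have g1 : P = (P ∪ A.image fun x => ({x} : Finset α)) \ (A.image fun x => ({x} : Finset α)) := by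
          rw [Finset.union_sdiff_distrib, Finset.sdiff_self, Finset.union_empty, eq_comm,
            Finset.sdiff_eq_self_iff_disjoint, Finset.disjoint_iff_inter_eq_empty]
          exact e1
        have g2 : P' = (P' ∪ A.image fun x => ({x} : Finset α)) \ (A.image fun x => ({x} : Finset α)) := by
          rw [Finset.union_sdiff_distrib, Finset.sdiff_self, Finset.union_empty, eq_comm,
            Finset.sdiff_eq_self_iff_disjoint, Finset.disjoint_iff_inter_eq_empty]
          exact e2
        rw [g1, g2, this]
      rw [hPP]
    · rintro ⟨P, S⟩ hPS
      rw [mem_pairsSet] at hPS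
      obtain ⟨hP, hSP, hS1, hSm⟩ := hPS
      dsimp only at hP hSP hS1 hSm
      set A := S.biUnion id with hA
      have hSA : S = A.image fun x => ({x} : Finset α) := by
        ext B
        constructor
        · intro hB
          obtain ⟨x, hx⟩ := Finset.card_eq_one.1 (hS1 B hB)
          subst hx
          refine Finset.mem_image.2 ⟨x, ?_, rfl⟩
          rw [hA, Finset.mem_biUnion]
          exact ⟨{x}, hB, Finset.mem_singleton_self x⟩
        · intro hB
          obtain ⟨x, hx, rfl⟩ := Finset.mem_image.1 hB
          rw [hA, Finset.mem_biUnion] at hx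
          obtain ⟨C, hC, hxC⟩ := hx
          obtain ⟨y, hy⟩ := Finset.card_eq_one.1 (hS1 C hC)
          subst hy
          simp only [id_eq, Finset.mem_singleton] at hxC
          rw [hxC]
          exact hC
      have hAs : A ⊆ s := by
        intro x hx
        rw [hA, Finset.mem_biUnion] at hx
        obtain ⟨C, hC, hxC⟩ := hx
        exact hP.1 C (hSP hC) hxC
      have hAm : A.card = m := by
        have : (A.image fun x => ({x} : Finset α)).card = A.card :=
          Finset.card_image_of_injective _ (fun x y hxy => by simpa using hxy)
        rw [← hSA] at this
        omega
      have hxAS : ∀ x ∈ A, ({x} : Finset α) ∈ S := by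
        intro x hx
        rw [hSA]
        exact Finset.mem_image_of_mem _ hx
      have hPdiff : IsPM (s \ A) (P \ S) := by
        refine ⟨?_, ?_, ?_⟩
        · intro B hB
          obtain ⟨hBP, hBS⟩ := Finset.mem_sdiff.1 hB
          intro x hxB
          rw [Finset.mem_sdiff]
          refine ⟨hP.1 B hBP hxB, fun hxA => ?_⟩
          have h1 : ({x} : Finset α) ∈ P := hSP (hxAS x hxA)
          have := hP.block_eq hBP h1 hxB (Finset.mem_singleton_self x)
          rw [this] at hBS
          exact hBS (hxAS x hxA)
        · intro B hB
          exact hP.2.1 B (Finset.mem_sdiff.1 hB).1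
        · intro x hx
          obtain ⟨hxs, hxA⟩ := Finset.mem_sdiff.1 hx
          obtain ⟨B, ⟨hB, hxB⟩, huniq⟩ := hP.2.2 x hxs
          have hBS : B ∉ S := by
            intro hBS
            obtain ⟨y, hy⟩ := Finset.card_eq_one.1 (hS1 B hBS)
            subst hy
            rw [Finset.mem_singleton] at hxB
            subst hxB
            apply hxA
            rw [hA, Finset.mem_biUnion]
            exact ⟨{x}, hBS, Finset.mem_singleton_self x⟩
          refine ⟨B, ⟨Finset.mem_sdiff.2 ⟨hB, hBS⟩, hxB⟩, ?_⟩
          rintro C ⟨hC, hxC⟩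
          exact huniq C ⟨(Finset.mem_sdiff.1 hC).1, hxC⟩
      refine ⟨⟨A, P \ S⟩, ?_, ?_⟩
      · rw [Finset.mem_sigma, Finset.mem_powersetCard]
        exact ⟨⟨hAs, hAm⟩, mem_pmSet.2 hPdiff⟩
      · simp only [Prod.mk.injEq]
        constructor
        · rw [← hSA, Finset.sdiff_union_self_eq_union, Finset.union_eq_left.2 hSP]
        · exact hSA.symm
  rw [← key, Finset.card_sigma]
  have : ∀ A ∈ s.powersetCard m, (pmSet (s \ A)).card = tel (s.card - m) := by
    intro A hA
    rw [Finset.mem_powersetCard] at hA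
    rw [pmSet_card, Finset.card_sdiff_of_subset hA.1, hA.2]
  rw [Finset.sum_congr rfl this, Finset.sum_const, smul_eq_mul, Finset.card_powersetCard]


lemma sum_R_ext (n N : ℕ) (h : n ≤ N) :
    ∑ t ∈ Finset.range (N+1), n.choose (2*t) * Nat.doubleFactorial (2*t-1) = R n := by
  rw [R]
  apply (Finset.sum_subset (Finset.range_subset_range.2 (by omega)) ?_).symm
  intro t _ ht
  rw [Finset.mem_range, not_lt] at ht
  rw [Nat.choose_eq_zero_of_lt (by omega), zero_mul]

lemma isPM_univ_iff {n : ℕ} {P : Finset (Finset (Fin n))} :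
    IsPM Finset.univ P ↔ IsSetPartition P ∧ ∀ B ∈ P, B.card ≤ 2 := by
  rw [IsSetPartition]
  constructor
  · rintro ⟨h1, h2, h3⟩
    exact ⟨⟨fun B hB => (h2 B hB).1, fun x => h3 x (Finset.mem_univ x)⟩,
      fun B hB => (h2 B hB).2⟩
  · rintro ⟨⟨h1, h2⟩, h3⟩
    exact ⟨fun B _ => Finset.subset_univ B, fun B hB => ⟨h1 B hB, h3 B hB⟩,
      fun x _ => h2 x⟩

lemma natCard_eq_card {β : Type*} [Fintype β] (p : β → Prop) (t : Finset β)
    (h : ∀ x, p x ↔ x ∈ t) : Nat.card {x // p x} = t.card := by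
  classical
  rw [Nat.card_eq_fintype_card, Fintype.card_subtype]
  congr 1
  ext x
  simp [h x]

end RB

/-- For the rook-Brauer algebra: the number of symmetric `m`-diagrams (set partitions of
`{1,…,k}` into blocks of size at most `2` with `m` distinguished propagating singleton
blocks) is `∑_t C(k,m) C(k-m,2t) (2t-1)‼`, and summing the squares times `m!` over `m`
gives the number of set partitions of a `2k`-element set with all blocks of size `1` or
`2` (the dimension of `RB_k(n)`). -/
theorem rookBrauer_symmetric_diagrams_and_dimension (k m : ℕ) (hm : m ≤ k) :
    Nat.card {PS : Finset (Finset (Fin k)) × Finset (Finset (Fin k)) //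
        IsSetPartition PS.1 ∧ (∀ B ∈ PS.1, B.card ≤ 2) ∧
        PS.2 ⊆ PS.1 ∧ (∀ B ∈ PS.2, B.card = 1) ∧ PS.2.card = m} =
      ∑ t ∈ Finset.range (k + 1),
        k.choose m * (k - m).choose (2 * t) * Nat.doubleFactorial (2 * t - 1) ∧
    ∑ m' ∈ Finset.range (k + 1),
        (∑ t ∈ Finset.range (k + 1),
          k.choose m' * (k - m').choose (2 * t) * Nat.doubleFactorial (2 * t - 1)) ^ 2 *
          m'.factorial =
      Nat.card {P : Finset (Finset (Fin (2 * k))) //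
        IsSetPartition P ∧ ∀ B ∈ P, B.card = 1 ∨ B.card = 2} := by
  classical
  have inner : ∀ m' : ℕ, m' ≤ k → ∑ t ∈ Finset.range (k + 1),
      k.choose m' * (k - m').choose (2 * t) * Nat.doubleFactorial (2 * t - 1)
      = k.choose m' * RB.tel (k - m') := by
    intro m' hm'
    rw [← RB.R_eq_tel, ← RB.sum_R_ext (k - m') k (by omega), Finset.mul_sum]
    apply Finset.sum_congr rfl
    intro t _
    ring
  constructor
  · rw [RB.natCard_eq_card _ (RB.pairsSet (Finset.univ : Finset (Fin k)) m) ?_]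
    · rw [RB.pairsSet_card, Finset.card_univ, Fintype.card_fin, inner m hm]
    · intro PS
      rw [RB.mem_pairsSet]
      constructor
      · rintro ⟨h1, h2, h3, h4, h5⟩
        exact ⟨RB.isPM_univ_iff.2 ⟨h1, h2⟩, h3, h4, h5⟩
      · rintro ⟨h1, h3, h4, h5⟩
        obtain ⟨ha, hb⟩ := RB.isPM_univ_iff.1 h1
        exact ⟨ha, hb, h3, h4, h5⟩
  · rw [RB.natCard_eq_card _ (RB.pmSet (Finset.univ : Finset (Fin (2 * k)))) ?_]
    · rw [RB.pmSet_card, Finset.card_univ, Fintype.card_fin]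
      have e1 : ∀ m' ∈ Finset.range (k+1),
          (∑ t ∈ Finset.range (k + 1),
            k.choose m' * (k - m').choose (2 * t) * Nat.doubleFactorial (2 * t - 1)) ^ 2 *
            m'.factorial
          = k.choose m' * k.choose m' * m'.factorial * RB.tel (k - m') * RB.tel (k - m') := by
        intro m' hm'
        rw [inner m' (by simpa using Nat.lt_succ_iff.1 (Finset.mem_range.1 hm'))]
        ring
      rw [Finset.sum_congr rfl e1]
      have : RB.G k k = RB.tel (2 * k) := by
        rw [RB.G_eq_tel]
        congr 1
        omega
      rw [← this, RB.G]
    · intro P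
      rw [RB.mem_pmSet, RB.isPM_univ_iff]
      constructor
      · rintro ⟨hsp, hb⟩
        refine ⟨hsp, fun B hB => ?_⟩
        have h1 := hsp.1 B hB
        have h2 := hb B hB
        have h3 := Finset.card_pos.2 h1
        omega
      · rintro ⟨hsp, hb⟩
        refine ⟨hsp, fun B hB => ?_⟩
        have h1 := hsp.1 B hB
        have h2 := hb B hB
        have h3 := Finset.card_pos.2 h1
        omega
end

section
/- Let κ and μ be integer partitions with |μ| = m. Define for the Brauer algebra F^{μ,κ} = ∏_i C(m_i(κ), m_i(μ)) · ∑_t C(d_i, 2t)·(2t−1)!!·i^t·((1+(−1)^i)/2)^{d_i − 2t}, where d_i = m_i(κ) − m_i(μ) and 0^0 = 1. Then F^{μ,κ} is a nonnegative integer, equal to 0 unless m_i(μ) ≤ m_i(κ) for all i and, for every odd i, d_i is even; and F^{κ,κ} = 1. -/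
/-- The Brauer-algebra coefficient
`F^{μ,κ} = ∏_i C(m_i(κ), m_i(μ)) ⬝ ∑_t C(d_i, 2t)(2t-1)‼ i^t ((1+(-1)^i)/2)^{d_i - 2t}`,
where `d_i = m_i(κ) - m_i(μ)`, `(1+(-1)^i)/2` is `1` for even `i` and `0` for odd `i`,
and `0^0 = 1`. -/
def FBrauer (m K : ℕ) (μ : Nat.Partition m) (κ : Nat.Partition K) : ℕ :=
  ∏ i ∈ Finset.range (m + K + 1),
    (κ.parts.count i).choose (μ.parts.count i) *
      ∑ t ∈ Finset.range (m + K + 1),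
        (κ.parts.count i - μ.parts.count i).choose (2 * t) *
          Nat.doubleFactorial (2 * t - 1) * i ^ t *
          (if Even i then 1 else 0) ^ (κ.parts.count i - μ.parts.count i - 2 * t)

lemma count_eq_zero_of_gt {n : ℕ} (p : Nat.Partition n) {i : ℕ} (h : n < i) :
    p.parts.count i = 0 := by
  rw [Multiset.count_eq_zero]
  intro hm
  have : i ≤ p.parts.sum := Multiset.single_le_sum (fun x _ => Nat.zero_le x) i hm
  rw [p.parts_sum] at this
  omega

/-- `F^{μ,κ}` is a nonnegative integer, it vanishes unless `m_i(μ) ≤ m_i(κ)` for all `i`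
and `d_i = m_i(κ) - m_i(μ)` is even for every odd `i`, and `F^{κ,κ} = 1`. -/
theorem FBrauer_properties (m K : ℕ) (μ : Nat.Partition m) (κ : Nat.Partition K) :
    (0 ≤ (FBrauer m K μ κ : ℤ)) ∧
    (¬((∀ i, μ.parts.count i ≤ κ.parts.count i) ∧
        ∀ i, ¬Even i → Even (κ.parts.count i - μ.parts.count i)) →
      FBrauer m K μ κ = 0) ∧
    (∀ κ' : Nat.Partition K, FBrauer K K κ' κ' = 1) := by
  refine ⟨Int.natCast_nonneg _, ?_, ?_⟩
  · intro h
    rw [not_and_or] at h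
    unfold FBrauer
    rcases h with h | h
    · push_neg at h
      obtain ⟨i, hi⟩ := h
      apply Finset.prod_eq_zero (i := i)
      · rw [Finset.mem_range]
        by_contra hc
        push_neg at hc
        have := count_eq_zero_of_gt μ (i := i) (by omega)
        omega
      · rw [Nat.choose_eq_zero_of_lt hi, zero_mul]
    · push_neg at h
      obtain ⟨i, hodd, hd⟩ := h
      apply Finset.prod_eq_zero (i := i)
      · rw [Finset.mem_range]
        by_contra hc
        push_neg at hc
        have h1 := count_eq_zero_of_gt κ (i := i) (by omega)
        have h2 := count_eq_zero_of_gt μ (i := i) (by omega)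
        rw [h1, h2] at hd
        exact hd (by simp)
      · have hsum : (∑ t ∈ Finset.range (m + K + 1),
            (κ.parts.count i - μ.parts.count i).choose (2 * t) *
              Nat.doubleFactorial (2 * t - 1) * i ^ t *
              (if Even i then 1 else 0) ^ (κ.parts.count i - μ.parts.count i - 2 * t)) = 0 := by
          apply Finset.sum_eq_zero
          intro t _
          rw [if_neg hodd]
          rcases le_or_gt (2 * t) (κ.parts.count i - μ.parts.count i) with hle | hlt
          · have hne : κ.parts.count i - μ.parts.count i - 2 * t ≠ 0 := by
              intro h0
              exact hd ⟨t, by omega⟩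
            rw [zero_pow hne, mul_zero]
          · rw [Nat.choose_eq_zero_of_lt hlt, zero_mul, zero_mul, zero_mul]
        rw [hsum, mul_zero]
  · intro κ'
    unfold FBrauer
    apply Finset.prod_eq_one
    intro i _
    rw [Nat.choose_self, one_mul, Nat.sub_self]
    rw [Finset.sum_eq_single_of_mem 0 (Finset.mem_range.mpr (by omega))]
    · simp
    · intro t _ ht
      rw [Nat.choose_eq_zero_of_lt (by omega), zero_mul, zero_mul, zero_mul]
end
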